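/- arXiv:2505.19642 — 10 statements merged into one kernel-verified Lean document; each statement's English description precedes it below -/
import Mathlib

section
/- If r ≥ 2 and n_1 ≥ n_2 ≥ ⋯ ≥ n_r ≥ 2, then κ(K_{n_1} □ K_{n_2} □ ⋯ □ K_{n_r}) = 2·n_2·n_3⋯n_r, where κ(G) = min over distinct vertex pairs x,y of Σ_{w∈V(G)} |d(x,w)−d(y,w)|. -/
open Finset

section aux
variable {r : ℕ} {n : Fin r → ℕ}

private def fiberEquiv (j : Fin r) (a : Fin (n j)) :
    {w : ∀ i, Fin (n i) // w j = a} ≃ (∀ i : {i : Fin r // i ≠ j}, Fin (n i.1)) where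
  toFun w i := w.1 i.1
  invFun g := ⟨fun i => if h : i = j then Fin.cast (by rw [h]) a else g ⟨i, h⟩, by simp⟩
  left_inv w := by
    ext i
    by_cases h : i = j
    · subst h; simp [w.2]
    · simp [h]
  right_inv g := by
    ext i
    simp [i.2]

private lemma card_fiber (j : Fin r) (a : Fin (n j)) :
    (Finset.univ.filter fun w : ∀ i, Fin (n i) => w j = a).card
      = ∏ i ∈ Finset.univ.erase j, n i := by
  rw [← Fintype.card_subtype, Fintype.card_congr (fiberEquiv j a), Fintype.card_pi]
  simp only [Fintype.card_fin]
  exact (Finset.prod_subtype _ (fun x => by simp) (fun i => n i)).symm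

private lemma sum_ind (j : Fin r) (a : Fin (n j)) :
    ∑ w : ∀ i, Fin (n i), (if w j = a then (1 : ℕ) else 0)
      = ∏ i ∈ Finset.univ.erase j, n i := by
  rw [← Finset.card_filter]
  exact card_fiber j a

private lemma hd_sum (x w : ∀ i, Fin (n i)) :
    (hammingDist x w : ℤ) = ∑ i, if x i = w i then (0 : ℤ) else 1 := by
  rw [hammingDist, Finset.card_filter]
  push_cast
  exact Finset.sum_congr rfl (fun i _ => by by_cases h : x i = w i <;> simp [h])

private lemma D_sum (x y w : ∀ i, Fin (n i)) :
    (hammingDist x w : ℤ) - hammingDist y w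
      = ∑ i, ((if x i = w i then (0 : ℤ) else 1) - (if y i = w i then (0 : ℤ) else 1)) := by
  rw [hd_sum, hd_sum, Finset.sum_sub_distrib]

private lemma D_update (x y w : ∀ i, Fin (n i)) (j : Fin r) (hxy : x j ≠ y j)
    (hw : w j = x j) :
    (hammingDist x (Function.update w j (y j)) : ℤ)
        - hammingDist y (Function.update w j (y j))
      = ((hammingDist x w : ℤ) - hammingDist y w) + 2 := by
  have key : ∑ i, (((if x i = Function.update w j (y j) i then (0 : ℤ) else 1)
      - (if y i = Function.update w j (y j) i then (0 : ℤ) else 1))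
      - ((if x i = w i then (0 : ℤ) else 1) - (if y i = w i then (0 : ℤ) else 1))) = 2 := by
    rw [Finset.sum_eq_single j]
    · simp [hw, hxy, (Ne.symm hxy)]
    · intro i _ hi
      simp [Function.update_of_ne hi]
    · simp
  rw [Finset.sum_sub_distrib] at key
  rw [D_sum x y, D_sum x y]
  linarith

private lemma lower_bd (x y : ∀ i, Fin (n i)) (j : Fin r) (hxy : x j ≠ y j) :
    2 * ∏ i ∈ Finset.univ.erase j, n i
      ≤ ∑ w : ∀ i, Fin (n i), ((hammingDist x w : ℤ) - hammingDist y w).natAbs := by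
  classical
  set f : (∀ i, Fin (n i)) → ℕ :=
    fun w => ((hammingDist x w : ℤ) - hammingDist y w).natAbs with hf
  set S : Finset (∀ i, Fin (n i)) := Finset.univ.filter (fun w => w j = x j) with hS
  set T : Finset (∀ i, Fin (n i)) := Finset.univ.filter (fun w => w j = y j) with hT
  have hdisj : Disjoint S T := by
    rw [Finset.disjoint_filter]
    intro w _ hw hw'
    exact hxy (hw ▸ hw' ▸ rfl)
  have hTS : ∑ w ∈ T, f w = ∑ w ∈ S, f (Function.update w j (y j)) := by
    refine Finset.sum_nbij' (fun w => Function.update w j (x j))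
      (fun w => Function.update w j (y j)) ?_ ?_ ?_ ?_ ?_
    · intro a ha; simp [hS]
    · intro a ha; simp [hT]
    · intro a ha
      rw [hT, Finset.mem_filter] at ha
      funext i
      by_cases h : i = j
      · subst h; simp [ha.2]
      · simp [h]
    · intro a ha
      rw [hS, Finset.mem_filter] at ha
      funext i
      by_cases h : i = j
      · subst h; simp [ha.2]
      · simp [h]
    · intro a ha
      rw [hT, Finset.mem_filter] at ha
      congr 1
      funext i
      by_cases h : i = j
      · subst h; simp [ha.2]
      · simp [h]
  have hpair : ∀ w ∈ S, 2 ≤ f w + f (Function.update w j (y j)) := by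
    intro w hw
    rw [hS, Finset.mem_filter] at hw
    have h2 := D_update x y w j hxy hw.2
    have h3 := Int.natAbs_sub_le
      ((hammingDist x (Function.update w j (y j)) : ℤ)
        - hammingDist y (Function.update w j (y j)))
      ((hammingDist x w : ℤ) - hammingDist y w)
    rw [h2, add_sub_cancel_left] at h3
    norm_num at h3
    simp only [hf]
    omega
  have hScard : S.card = ∏ i ∈ Finset.univ.erase j, n i := card_fiber j (x j)
  calc 2 * ∏ i ∈ Finset.univ.erase j, n i
      = ∑ _w ∈ S, 2 := by rw [Finset.sum_const, smul_eq_mul, hScard, mul_comm]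
    _ ≤ ∑ w ∈ S, (f w + f (Function.update w j (y j))) := Finset.sum_le_sum hpair
    _ = ∑ w ∈ S, f w + ∑ w ∈ T, f w := by rw [Finset.sum_add_distrib, hTS]
    _ = ∑ w ∈ S ∪ T, f w := (Finset.sum_union hdisj).symm
    _ ≤ ∑ w, f w := Finset.sum_le_sum_of_subset (Finset.subset_univ _)

private lemma exact_val (x : ∀ i, Fin (n i)) (j : Fin r) (b : Fin (n j)) (hb : x j ≠ b) :
    ∑ w : ∀ i, Fin (n i),
        ((hammingDist x w : ℤ) - hammingDist (Function.update x j b) w).natAbs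
      = 2 * ∏ i ∈ Finset.univ.erase j, n i := by
  classical
  have hterm : ∀ w : ∀ i, Fin (n i),
      ((hammingDist x w : ℤ) - hammingDist (Function.update x j b) w).natAbs
        = (if w j = x j then 1 else 0) + (if w j = b then 1 else 0) := by
    intro w
    rw [D_sum]
    rw [Finset.sum_eq_single j (fun i _ hi => by simp [Function.update_of_ne hi]) (by simp)]
    simp only [Function.update_self]
    by_cases h1 : w j = x j
    · have h2 : ¬ (b = w j) := fun h => hb (h1 ▸ h.symm)
      have h2' : ¬ (w j = b) := fun h => h2 h.symm
      rw [if_pos h1.symm, if_neg h2, if_pos h1, if_neg h2']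
      norm_num
    · by_cases h2 : w j = b
      · rw [if_neg (fun h : x j = w j => h1 h.symm), if_pos h2.symm, if_neg h1, if_pos h2]
        norm_num
      · rw [if_neg (fun h : x j = w j => h1 h.symm), if_neg (fun h : b = w j => h2 h.symm),
          if_neg h1, if_neg h2]
        norm_num
  rw [Finset.sum_congr rfl (fun w _ => hterm w), Finset.sum_add_distrib,
    sum_ind j (x j), sum_ind j b, two_mul]
end aux

/-- `κ` of a Hamming graph: `κ(K_{n_1} □ ⋯ □ K_{n_r}) = 2·n_2⋯n_r`, where the distance
in the product is the Hamming distance and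
`κ(G) = min_{x ≠ y} Σ_{w ∈ V(G)} |d(x,w) − d(y,w)|`. -/
theorem stmt3 (r : ℕ) (hr : 2 ≤ r) (n : Fin r → ℕ) (hmono : Antitone n)
    (hn : ∀ i, 2 ≤ n i) :
    sInf {d : ℕ | ∃ x y : ∀ i, Fin (n i), x ≠ y ∧
        d = ∑ w : ∀ i, Fin (n i), ((hammingDist x w : ℤ) - (hammingDist y w : ℤ)).natAbs}
      = 2 * ∏ i ∈ Finset.univ.erase (⟨0, by omega⟩ : Fin r), n i := by
  classical
  set j0 : Fin r := ⟨0, by omega⟩ with hj0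
  set x0 : ∀ i, Fin (n i) := fun i => ⟨0, by have := hn i; omega⟩ with hx0
  set b0 : Fin (n j0) := ⟨1, by have := hn j0; omega⟩ with hb0
  have hxb : x0 j0 ≠ b0 := by
    simp [hx0, hb0, Fin.ext_iff]
  have hmem : 2 * ∏ i ∈ Finset.univ.erase j0, n i ∈
      {d : ℕ | ∃ x y : ∀ i, Fin (n i), x ≠ y ∧
        d = ∑ w : ∀ i, Fin (n i), ((hammingDist x w : ℤ) - (hammingDist y w : ℤ)).natAbs} := by
    refine ⟨x0, Function.update x0 j0 b0, ?_, (exact_val x0 j0 b0 hxb).symm⟩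
    intro h
    apply hxb
    conv_lhs => rw [h]
    simp
  refine le_antisymm (Nat.sInf_le hmem) (le_csInf ⟨_, hmem⟩ ?_)
  rintro d ⟨x, y, hne, rfl⟩
  obtain ⟨j, hj⟩ := Function.ne_iff.mp hne
  have h1 := lower_bd x y j hj
  have h2 : ∏ i ∈ Finset.univ.erase j0, n i ≤ ∏ i ∈ Finset.univ.erase j, n i := by
    have e1 : (∏ i ∈ Finset.univ.erase j, n i) * n j = ∏ i, n i :=
      Finset.prod_erase_mul _ _ (Finset.mem_univ j)
    have e2 : (∏ i ∈ Finset.univ.erase j0, n i) * n j0 = ∏ i, n i :=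
      Finset.prod_erase_mul _ _ (Finset.mem_univ j0)
    have hle : n j ≤ n j0 := hmono (by simp [hj0, Fin.le_def])
    have : (∏ i ∈ Finset.univ.erase j0, n i) * n j0
        ≤ (∏ i ∈ Finset.univ.erase j, n i) * n j0 := by
      calc (∏ i ∈ Finset.univ.erase j0, n i) * n j0 = (∏ i ∈ Finset.univ.erase j, n i) * n j :=
            by rw [e1, e2]
        _ ≤ (∏ i ∈ Finset.univ.erase j, n i) * n j0 := Nat.mul_le_mul_left _ hle
    exact Nat.le_of_mul_le_mul_right this (by have := hn j0; omega)
  omega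
end

section
/- In G = K_n □ K_n with n ≥ 2, any weak (2n)-resolving set must equal V(G); hence wdim_{2n}(K_n □ K_n) = n². -/
/-- Distance in `K_n □ K_m`: the number of differing coordinates. -/
def hd {n m : ℕ} (x y : Fin n × Fin m) : ℕ :=
  (if x.1 = y.1 then 0 else 1) + (if x.2 = y.2 then 0 else 1)

/-- `Δ_S(x,y) = Σ_{w ∈ S} |d(x,w) − d(y,w)|`. -/
def delta {n m : ℕ} (S : Finset (Fin n × Fin m)) (x y : Fin n × Fin m) : ℕ :=
  ∑ w ∈ S, ((hd x w : ℤ) - (hd y w : ℤ)).natAbs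

/-- `S` is a weak `k`-resolving set of `K_n □ K_m`. -/
def IsWeakResolving {n m : ℕ} (k : ℕ) (S : Finset (Fin n × Fin m)) : Prop :=
  ∀ x y : Fin n × Fin m, x ≠ y → k ≤ delta S x y

/-- The weak `k`-metric dimension of `K_n □ K_m`. -/
noncomputable def wdim (n m k : ℕ) : ℕ :=
  sInf {c | ∃ S : Finset (Fin n × Fin m), IsWeakResolving k S ∧ S.card = c}

lemma univ_resolving (n : ℕ) :
    IsWeakResolving (2 * n) (Finset.univ : Finset (Fin n × Fin n)) := by
  rintro ⟨a, b⟩ ⟨c, d⟩ hxy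
  by_cases hbd : b = d
  · have hac : a ≠ c := by
      intro h; exact hxy (by simp [h, hbd])
    rw [delta, Fintype.sum_prod_type_right]
    calc 2 * n = ∑ _w2 : Fin n, 2 := by simp [mul_comm]
      _ ≤ ∑ w2 : Fin n, ∑ w1 : Fin n,
          ((hd (a, b) (w1, w2) : ℤ) - (hd (c, d) (w1, w2) : ℤ)).natAbs := by
        apply Finset.sum_le_sum
        intro w2 _
        calc (2 : ℕ) ≤ ((hd (a, b) (a, w2) : ℤ) - (hd (c, d) (a, w2) : ℤ)).natAbs +
            ((hd (a, b) (c, w2) : ℤ) - (hd (c, d) (c, w2) : ℤ)).natAbs := by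
              simp only [hd, hbd]
              split_ifs <;> simp_all
          _ = ∑ w1 ∈ ({a, c} : Finset (Fin n)),
              ((hd (a, b) (w1, w2) : ℤ) - (hd (c, d) (w1, w2) : ℤ)).natAbs := by
              rw [Finset.sum_pair hac]
          _ ≤ _ := Finset.sum_le_sum_of_subset (Finset.subset_univ _)
  · rw [delta, Fintype.sum_prod_type]
    calc 2 * n = ∑ _w1 : Fin n, 2 := by simp [mul_comm]
      _ ≤ ∑ w1 : Fin n, ∑ w2 : Fin n,
          ((hd (a, b) (w1, w2) : ℤ) - (hd (c, d) (w1, w2) : ℤ)).natAbs := by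
        apply Finset.sum_le_sum
        intro w1 _
        calc (2 : ℕ) ≤ ((hd (a, b) (w1, b) : ℤ) - (hd (c, d) (w1, b) : ℤ)).natAbs +
            ((hd (a, b) (w1, d) : ℤ) - (hd (c, d) (w1, d) : ℤ)).natAbs := by
              simp only [hd]
              split_ifs <;> simp_all
          _ = ∑ w2 ∈ ({b, d} : Finset (Fin n)),
              ((hd (a, b) (w1, w2) : ℤ) - (hd (c, d) (w1, w2) : ℤ)).natAbs := by
              rw [Finset.sum_pair hbd]
          _ ≤ _ := Finset.sum_le_sum_of_subset (Finset.subset_univ _)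

lemma resolving_eq_univ (n : ℕ) (hn : 2 ≤ n) (S : Finset (Fin n × Fin n))
    (hS : IsWeakResolving (2 * n) S) : S = Finset.univ := by
  by_contra hne
  obtain ⟨v, hv⟩ : ∃ v, v ∉ S := by
    by_contra h
    push_neg at h
    exact hne (Finset.eq_univ_of_forall h)
  obtain ⟨a, b⟩ := v
  obtain ⟨c, hca⟩ : ∃ c : Fin n, c ≠ a :=
    Fintype.exists_ne_of_one_lt_card (by simp; omega) a
  have hxy : ((a, b) : Fin n × Fin n) ≠ (c, b) := by
    simp [Ne.symm hca]
  have h1 : delta Finset.univ (a, b) (c, b) = 2 * n := by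
    rw [delta, Fintype.sum_prod_type]
    have h2 : ∀ w1 w2 : Fin n, ((hd (a, b) (w1, w2) : ℤ) - (hd (c, b) (w1, w2) : ℤ)).natAbs
        = (if a = w1 then 1 else 0) + (if c = w1 then 1 else 0) := by
      intro w1 w2
      simp only [hd]
      split_ifs <;> try omega
      all_goals exact absurd ((‹c = w1›).trans (‹a = w1›).symm) hca
    simp only [h2]
    simp [Finset.sum_add_distrib, Finset.sum_ite_eq, ← Finset.mul_sum, mul_comm]
  have h3 : delta S (a, b) (c, b) < delta Finset.univ (a, b) (c, b) := by
    apply Finset.sum_lt_sum_of_subset (Finset.subset_univ S) (Finset.mem_univ (a, b)) hv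
    · simp [hd, hca]
    · intro j _ _; exact Nat.zero_le _
  have h4 := hS _ _ hxy
  omega

/-- In `K_n □ K_n` (n ≥ 2), any weak `2n`-resolving set is the whole vertex set;
hence `wdim_{2n}(K_n □ K_n) = n²`. -/
theorem stmt5 (n : ℕ) (hn : 2 ≤ n) :
    (∀ S : Finset (Fin n × Fin n), IsWeakResolving (2 * n) S → S = Finset.univ) ∧
    wdim n n (2 * n) = n ^ 2 := by
  refine ⟨resolving_eq_univ n hn, ?_⟩
  have hcard : (Finset.univ : Finset (Fin n × Fin n)).card = n ^ 2 := by
    simp [sq]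
  have hmem : n ^ 2 ∈ {c | ∃ S : Finset (Fin n × Fin n), IsWeakResolving (2 * n) S ∧ S.card = c} :=
    ⟨Finset.univ, univ_resolving n, hcard⟩
  refine le_antisymm (Nat.sInf_le hmem) ?_
  apply le_csInf ⟨_, hmem⟩
  rintro c ⟨S, hSres, rfl⟩
  rw [resolving_eq_univ n hn S hSres, hcard]
end

section
/- Let n ≥ 3 and let k = 2n − 2t with 1 ≤ t ≤ n−2 (so 4 ≤ k ≤ 2n−2 is even). The set X_t = ⋃_{i=t}^{n−1} D_i, where D_i = {(i+j mod n, j) : j ∈ Z_n}, is a weak k-resolving set of K_n □ K_n of cardinality n·k/2. -/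
/-- The diagonal `D_i = {(i+j mod n, j) : j ∈ Z_n}` of `K_n □ K_n`. -/
def diag (n : ℕ) (i : ℕ) : Finset (Fin n × Fin n) :=
  Finset.univ.filter (fun p => p.1.val = (i + p.2.val) % n)

section aux
open Fin.NatCast
variable {n : ℕ} [NeZero n]

lemma mem_diag (i : ℕ) (p : Fin n × Fin n) :
    p ∈ diag n i ↔ p.1 = p.2 + (i : Fin n) := by
  have key : (p.2.val + i % n) % n = (i + p.2.val) % n := by
    rw [Nat.add_comm, Nat.mod_add_mod]
  simp only [diag, Finset.mem_filter, Finset.mem_univ, true_and, Fin.ext_iff,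
    Fin.val_add, Fin.val_natCast, key]

lemma diag_eq (i : ℕ) :
    diag n i = Finset.image (fun j : Fin n => (j + (i : Fin n), j)) Finset.univ := by
  ext p
  rw [mem_diag]
  simp only [Finset.mem_image, Finset.mem_univ, true_and]
  constructor
  · intro h
    exact ⟨p.2, Prod.ext_iff.mpr ⟨h.symm, rfl⟩⟩
  · rintro ⟨j, rfl⟩
    rfl

lemma card_diag (i : ℕ) : (diag n i).card = n := by
  rw [diag_eq, Finset.card_image_of_injective _
    (fun a b h => by simpa using congrArg Prod.snd h)]
  simp

lemma diag_disj {i j : ℕ} (hi : i < n) (hj : j < n) (hij : i ≠ j) :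
    Disjoint (diag n i) (diag n j) := by
  rw [Finset.disjoint_left]
  intro p hp hq
  rw [mem_diag] at hp hq
  apply hij
  have h2 : (i : Fin n) = (j : Fin n) := add_left_cancel (hp.symm.trans hq)
  have h3 := congrArg Fin.val h2
  rwa [Fin.val_natCast, Fin.val_natCast, Nat.mod_eq_of_lt hi, Nat.mod_eq_of_lt hj] at h3

lemma sum_diag (i : ℕ) (f : Fin n × Fin n → ℤ) :
    ∑ w ∈ diag n i, f w = ∑ j : Fin n, f (j + (i : Fin n), j) := by
  rw [diag_eq, Finset.sum_image (fun a _ b _ h => by simpa using congrArg Prod.snd h)]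

lemma diag_count_fst (i : ℕ) (u : Fin n) :
    ∑ w ∈ diag n i, (if u = w.1 then (1:ℤ) else 0) = 1 := by
  rw [sum_diag]
  have h : ∀ j : Fin n, (u = j + (i : Fin n)) ↔ (j = u - (i : Fin n)) := by
    intro j
    rw [eq_comm, eq_sub_iff_add_eq]
  simp only [h]
  simp

lemma diag_count_snd (i : ℕ) (v : Fin n) :
    ∑ w ∈ diag n i, (if v = w.2 then (1:ℤ) else 0) = 1 := by
  rw [sum_diag]
  simp [eq_comm]

lemma S_pairwise (t : ℕ) :
    Set.PairwiseDisjoint ↑(Finset.Icc t (n-1)) (diag n) := by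
  intro i hi j hj hij
  simp only [Finset.coe_Icc, Set.mem_Icc] at hi hj
  have hn : 0 < n := Nat.pos_of_ne_zero (NeZero.ne n)
  exact diag_disj (by omega) (by omega) hij

lemma sum_S_fst (t : ℕ) (u : Fin n) :
    ∑ w ∈ (Finset.Icc t (n-1)).biUnion (diag n), (if u = w.1 then (1:ℤ) else 0)
      = (n - t : ℕ) := by
  rw [Finset.sum_biUnion (S_pairwise t),
    Finset.sum_congr rfl (fun i _ => diag_count_fst i u),
    Finset.sum_const, Nat.card_Icc, nsmul_eq_mul, mul_one]
  have hn : 0 < n := Nat.pos_of_ne_zero (NeZero.ne n)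
  congr 1
  omega

lemma sum_S_snd (t : ℕ) (v : Fin n) :
    ∑ w ∈ (Finset.Icc t (n-1)).biUnion (diag n), (if v = w.2 then (1:ℤ) else 0)
      = (n - t : ℕ) := by
  rw [Finset.sum_biUnion (S_pairwise t),
    Finset.sum_congr rfl (fun i _ => diag_count_snd i v),
    Finset.sum_const, Nat.card_Icc, nsmul_eq_mul, mul_one]
  have hn : 0 < n := Nat.pos_of_ne_zero (NeZero.ne n)
  congr 1
  omega

omit [NeZero n] in
lemma sum_S_point (t : ℕ) (p q : Fin n) :
    ∑ w ∈ (Finset.Icc t (n-1)).biUnion (diag n),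
      (if p = w.1 ∧ q = w.2 then (1:ℤ) else 0) ≤ 1 := by
  have h : ∀ w : Fin n × Fin n, (p = w.1 ∧ q = w.2) ↔ w = (p, q) := by
    intro w
    rw [Prod.ext_iff]
    constructor <;> exact fun ⟨h1, h2⟩ => ⟨h1.symm, h2.symm⟩
  simp only [h]
  rw [Finset.sum_ite_eq']
  split_ifs <;> norm_num

lemma card_S (t : ℕ) :
    ((Finset.Icc t (n-1)).biUnion (diag n)).card = (n - t) * n := by
  rw [Finset.card_biUnion (fun i hi j hj hij => S_pairwise t hi hj hij),
    Finset.sum_congr rfl (fun i _ => card_diag i), Finset.sum_const, smul_eq_mul,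
    Nat.card_Icc]
  have hn : 0 < n := Nat.pos_of_ne_zero (NeZero.ne n)
  congr 1
  omega

end aux

lemma pt_bd {n m : ℕ} {a : Fin n} {b d v : Fin m} (u : Fin n) (hbd : b ≠ d) :
    (if b = v then (1:ℤ) else 0) + (if d = v then 1 else 0)
      ≤ |((if a = u then (0:ℤ) else 1) + (if b = v then 0 else 1))
          - ((if a = u then (0:ℤ) else 1) + (if d = v then 0 else 1))| := by
  by_cases h3 : b = v <;> by_cases h4 : d = v <;>
    first
    | (exact absurd (h3.trans h4.symm) hbd)
    | (simp [h3, h4] <;> omega)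

lemma pt_ac {n m : ℕ} {a c u : Fin n} {b : Fin m} (v : Fin m) (hac : a ≠ c) :
    (if a = u then (1:ℤ) else 0) + (if c = u then 1 else 0)
      ≤ |((if a = u then (0:ℤ) else 1) + (if b = v then 0 else 1))
          - ((if c = u then (0:ℤ) else 1) + (if b = v then 0 else 1))| := by
  by_cases h1 : a = u <;> by_cases h2 : c = u <;>
    first
    | (exact absurd (h1.trans h2.symm) hac)
    | (simp [h1, h2] <;> omega)

lemma pt_gen {n m : ℕ} {a c u : Fin n} {b d v : Fin m} (hac : a ≠ c) (hbd : b ≠ d) :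
    (if a = u then (1:ℤ) else 0) + (if c = u then 1 else 0)
      + (if b = v then 1 else 0) + (if d = v then 1 else 0)
      - 2 * (if c = u ∧ b = v then 1 else 0) - 2 * (if a = u ∧ d = v then 1 else 0)
      ≤ |((if a = u then (0:ℤ) else 1) + (if b = v then 0 else 1))
          - ((if c = u then (0:ℤ) else 1) + (if d = v then 0 else 1))| := by
  by_cases h1 : a = u <;> by_cases h2 : c = u <;> by_cases h3 : b = v <;> by_cases h4 : d = v <;>
    first
    | (exact absurd (h1.trans h2.symm) hac)
    | (exact absurd (h3.trans h4.symm) hbd)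
    | (simp [h1, h2, h3, h4] <;> omega)


/-- For `n ≥ 3`, `k = 2n − 2t` with `1 ≤ t ≤ n−2`, the union of diagonals
`X_t = ⋃_{i=t}^{n−1} D_i` is a weak `k`-resolving set of `K_n □ K_n` of size `n·k/2`. -/
theorem stmt7 (n t k : ℕ) (hn : 3 ≤ n) (ht1 : 1 ≤ t) (ht2 : t ≤ n - 2)
    (hk : k = 2 * n - 2 * t) :
    IsWeakResolving k ((Finset.Icc t (n - 1)).biUnion (diag n)) ∧
    ((Finset.Icc t (n - 1)).biUnion (diag n)).card = n * (k / 2) := by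
  haveI : NeZero n := ⟨by omega⟩
  constructor
  · intro x y hxy
    obtain ⟨a, b⟩ := x
    obtain ⟨c, d⟩ := y
    set S := (Finset.Icc t (n - 1)).biUnion (diag n) with hSdef
    have hdel : (delta S (a, b) (c, d) : ℤ)
        = ∑ w ∈ S, |((if a = w.1 then (0:ℤ) else 1) + (if b = w.2 then 0 else 1))
            - ((if c = w.1 then (0:ℤ) else 1) + (if d = w.2 then 0 else 1))| := by
      simp only [delta, hd]
      push_cast [Int.natCast_natAbs]
      rfl
    suffices h : (k : ℤ) ≤ (delta S (a, b) (c, d) : ℤ) by exact_mod_cast h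
    rw [hdel]
    have hk2 : (k : ℤ) = 2 * ((n - t : ℕ) : ℤ) := by
      have : k = 2 * (n - t) := by omega
      exact_mod_cast this
    by_cases hac : a = c
    · have hbd : b ≠ d := by
        rintro rfl
        exact hxy (by rw [hac])
      subst hac
      have hsum := Finset.sum_le_sum (fun w (_ : w ∈ S) => pt_bd (a := a) (v := w.2) w.1 hbd)
      rw [Finset.sum_add_distrib, sum_S_snd, sum_S_snd] at hsum
      linarith
    · by_cases hbd : b = d
      · subst hbd
        have hsum := Finset.sum_le_sum (fun w (_ : w ∈ S) => pt_ac (b := b) (u := w.1) w.2 hac)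
        rw [Finset.sum_add_distrib, sum_S_fst, sum_S_fst] at hsum
        linarith
      · have hsum := Finset.sum_le_sum (fun w (_ : w ∈ S) => pt_gen (u := w.1) (v := w.2) hac hbd)
        rw [Finset.sum_sub_distrib, Finset.sum_sub_distrib, Finset.sum_add_distrib,
          Finset.sum_add_distrib, Finset.sum_add_distrib, ← Finset.mul_sum, ← Finset.mul_sum,
          sum_S_fst, sum_S_fst, sum_S_snd, sum_S_snd] at hsum
        have hE1 := sum_S_point (n := n) t c b
        have hE2 := sum_S_point (n := n) t a d
        have hN2 : (2 : ℤ) ≤ ((n - t : ℕ) : ℤ) := by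
          have : 2 ≤ n - t := by omega
          exact_mod_cast this
        linarith
  · rw [card_S]
    have hk2 : k / 2 = n - t := by omega
    rw [hk2, Nat.mul_comm]
end

section
/- Let n ≥ 3 and 4 ≤ k ≤ 2n−2 with k even. Every weak k-resolving set of K_n □ K_n has cardinality at least n·k/2. -/
lemma col_pair {n k : ℕ} [NeZero n] (S : Finset (Fin n × Fin n)) (hS : IsWeakResolving k S)
    (j j' : Fin n) (h : j ≠ j') :
    k ≤ (S.filter (fun w => w.2 = j)).card + (S.filter (fun w => w.2 = j')).card := by
  have hd0 := hS (0, j) (0, j') (by simp [Prod.ext_iff, h])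
  refine le_trans hd0 (le_of_eq ?_)
  rw [Finset.card_filter, Finset.card_filter, ← Finset.sum_add_distrib]
  unfold delta hd
  apply Finset.sum_congr rfl
  intro w _
  by_cases h1 : w.2 = j <;> by_cases h2 : w.2 = j' <;>
    by_cases h3 : (0 : Fin n) = w.1 <;>
    simp_all [eq_comm]

/-- For `n ≥ 3` and even `4 ≤ k ≤ 2n−2`, every weak `k`-resolving set of
`K_n □ K_n` has at least `n·k/2` elements. -/
theorem stmt8 (n k : ℕ) (hn : 3 ≤ n) (hk4 : 4 ≤ k) (hk : k ≤ 2 * n - 2) (hke : Even k)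
    (S : Finset (Fin n × Fin n)) (hS : IsWeakResolving k S) :
    n * (k / 2) ≤ S.card := by
  classical
  obtain ⟨m, rfl⟩ : ∃ m, n = m + 3 := ⟨n - 3, by omega⟩
  obtain ⟨t, rfl⟩ : ∃ t, k = 2 * t := by
    obtain ⟨t, ht⟩ := hke; exact ⟨t, by omega⟩
  have ht2 : 2 * t / 2 = t := by omega
  rw [ht2]
  set c : Fin (m + 3) → ℕ := fun j => (S.filter (fun w => w.2 = j)).card with hc
  have hsum : ∑ j, c j = S.card := by
    rw [hc, ← Finset.card_eq_sum_card_fiberwise (fun w _ => Finset.mem_univ w.2)]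
  -- each inner sum ∑_{j' ≠ j} (c j + c j') ≥ (n-1)·k
  have Hlow : (m + 3) * ((m + 2) * (2 * t)) ≤
      ∑ j : Fin (m + 3), ∑ j' ∈ Finset.univ.erase j, (c j + c j') := by
    calc (m + 3) * ((m + 2) * (2 * t))
        = ∑ _j : Fin (m + 3), ((m + 2) * (2 * t)) := by
          rw [Finset.sum_const, Finset.card_univ, Fintype.card_fin, smul_eq_mul]
      _ ≤ _ := by
          apply Finset.sum_le_sum
          intro j _
          calc (m + 2) * (2 * t)
              = ∑ _j' ∈ Finset.univ.erase j, (2 * t) := by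
                rw [Finset.sum_const, Finset.card_erase_of_mem (Finset.mem_univ j),
                  Finset.card_univ, Fintype.card_fin, smul_eq_mul]
                congr 1
            _ ≤ _ := by
                apply Finset.sum_le_sum
                intro j' hj'
                exact col_pair S hS j j' (Ne.symm (Finset.ne_of_mem_erase hj'))
  have Hhigh : ∑ j : Fin (m + 3), ∑ j' ∈ Finset.univ.erase j, (c j + c j')
      = (2 * m + 4) * S.card := by
    have Hj : ∀ j : Fin (m + 3),
        ∑ j' ∈ Finset.univ.erase j, (c j + c j') = (m + 1) * c j + S.card := by
      intro j
      have h2 : (∑ j' ∈ Finset.univ.erase j, c j') + c j = S.card := by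
        rw [Finset.sum_erase_add _ _ (Finset.mem_univ j)]; exact hsum
      have h3 : m + 3 - 1 = m + 2 := by omega
      rw [Finset.sum_add_distrib, Finset.sum_const,
        Finset.card_erase_of_mem (Finset.mem_univ j), Finset.card_univ, Fintype.card_fin,
        smul_eq_mul, h3, ← h2]
      ring
    rw [Finset.sum_congr rfl (fun j _ => Hj j), Finset.sum_add_distrib,
      ← Finset.mul_sum, hsum, Finset.sum_const, Finset.card_univ, Fintype.card_fin,
      smul_eq_mul]
    ring
  rw [Hhigh] at Hlow
  have key : (2 * (m + 2)) * ((m + 3) * t) ≤ (2 * (m + 2)) * S.card := by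
    calc (2 * (m + 2)) * ((m + 3) * t) = (m + 3) * ((m + 2) * (2 * t)) := by ring
      _ ≤ (2 * m + 4) * S.card := Hlow
      _ = (2 * (m + 2)) * S.card := by ring
  exact Nat.le_of_mul_le_mul_left key (by omega)
end

section
/- If n ≥ 3 and k ≥ 4 is even with k ≤ 2n, then wdim_k(K_n □ K_n) = n·(k/2). -/
/- ### Auxiliary lemmas -/

lemma abs_same_row {n m : ℕ} {a : Fin n} {b d : Fin m} (hbd : b ≠ d) (w : Fin n × Fin m) :
    ((hd (a,b) w : ℤ) - (hd (a,d) w : ℤ)).natAbs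
      = ((if b = w.2 then 1 else 0) + (if d = w.2 then 1 else 0)) := by
  obtain ⟨p, q⟩ := w
  simp only [hd]
  split_ifs <;> first | decide | simp_all

lemma abs_same_col {n m : ℕ} {a c : Fin n} {b : Fin m} (hac : a ≠ c) (w : Fin n × Fin m) :
    ((hd (a,b) w : ℤ) - (hd (c,b) w : ℤ)).natAbs
      = ((if a = w.1 then 1 else 0) + (if c = w.1 then 1 else 0)) := by
  obtain ⟨p, q⟩ := w
  simp only [hd]
  split_ifs <;> first | decide | simp_all

lemma abs_diag {n m : ℕ} {a c : Fin n} {b d : Fin m} (hac : a ≠ c) (hbd : b ≠ d)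
    (w : Fin n × Fin m) :
    ((hd (a,b) w : ℤ) - (hd (c,d) w : ℤ)).natAbs
      + 2 * (if a = w.1 ∧ d = w.2 then 1 else 0) + 2 * (if c = w.1 ∧ b = w.2 then 1 else 0)
      = (if a = w.1 then 1 else 0) + (if c = w.1 then 1 else 0)
        + (if b = w.2 then 1 else 0) + (if d = w.2 then 1 else 0) := by
  obtain ⟨p, q⟩ := w
  simp only [hd]
  split_ifs <;> first | decide | simp_all

/-- delta of a same-row pair is the sum of the two column counts. -/
lemma delta_same_row {n m : ℕ} (S : Finset (Fin n × Fin m)) {a : Fin n} {b d : Fin m}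
    (hbd : b ≠ d) :
    delta S (a,b) (a,d)
      = (S.filter (fun w => b = w.2)).card + (S.filter (fun w => d = w.2)).card := by
  unfold delta
  rw [Finset.sum_congr rfl (fun w _ => abs_same_row hbd w), Finset.sum_add_distrib,
    Finset.card_filter, Finset.card_filter]

/-- delta of a same-column pair is the sum of the two row counts. -/
lemma delta_same_col {n m : ℕ} (S : Finset (Fin n × Fin m)) {a c : Fin n} {b : Fin m}
    (hac : a ≠ c) :
    delta S (a,b) (c,b)
      = (S.filter (fun w => a = w.1)).card + (S.filter (fun w => c = w.1)).card := by
  unfold delta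
  rw [Finset.sum_congr rfl (fun w _ => abs_same_col hac w), Finset.sum_add_distrib,
    Finset.card_filter, Finset.card_filter]

/-- delta of a diagonal pair. -/
lemma delta_diag {n m : ℕ} (S : Finset (Fin n × Fin m)) {a c : Fin n} {b d : Fin m}
    (hac : a ≠ c) (hbd : b ≠ d) :
    delta S (a,b) (c,d)
      + 2 * (S.filter (fun w => a = w.1 ∧ d = w.2)).card
      + 2 * (S.filter (fun w => c = w.1 ∧ b = w.2)).card
      = (S.filter (fun w => a = w.1)).card + (S.filter (fun w => c = w.1)).card
        + (S.filter (fun w => b = w.2)).card + (S.filter (fun w => d = w.2)).card := by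
  unfold delta
  rw [Finset.card_filter, Finset.card_filter, Finset.card_filter, Finset.card_filter,
    Finset.card_filter, Finset.card_filter, Finset.mul_sum, Finset.mul_sum,
    ← Finset.sum_add_distrib, ← Finset.sum_add_distrib, ← Finset.sum_add_distrib,
    ← Finset.sum_add_distrib, ← Finset.sum_add_distrib]
  exact Finset.sum_congr rfl (fun w _ => abs_diag hac hbd w)

/-- Double counting: if every pair sum is at least `2*t`, the total is at least `n*t`. -/
lemma double_count {n t : ℕ} (hn : 2 ≤ n) (f : Fin n → ℕ)
    (h : ∀ b d : Fin n, b ≠ d → 2 * t ≤ f b + f d) : n * t ≤ ∑ b, f b := by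
  classical
  set T := ∑ b, f b with hT
  have key : ∀ b : Fin n, (n - 1) * (2 * t) ≤ ∑ d ∈ Finset.univ.erase b, (f b + f d) := by
    intro b
    calc (n - 1) * (2 * t) = ∑ _d ∈ Finset.univ.erase b, (2 * t) := by
          rw [Finset.sum_const, Finset.card_erase_of_mem (Finset.mem_univ b),
            Finset.card_univ, Fintype.card_fin, smul_eq_mul]
      _ ≤ _ := Finset.sum_le_sum fun d hd =>
          h b d (fun hbd => (Finset.mem_erase.1 hd).1 hbd.symm)
  have h2 : ∀ b : Fin n, ∑ d ∈ Finset.univ.erase b, (f b + f d) + (f b + f b)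
      = n * f b + T := by
    intro b
    rw [Finset.sum_erase_add Finset.univ _ (Finset.mem_univ b), Finset.sum_add_distrib,
      Finset.sum_const, Finset.card_univ, Fintype.card_fin, smul_eq_mul, hT]
  have h3 : n * ((n - 1) * (2 * t)) ≤ ∑ b, ∑ d ∈ Finset.univ.erase b, (f b + f d) := by
    calc n * ((n - 1) * (2 * t)) = ∑ _b : Fin n, (n - 1) * (2 * t) := by
          rw [Finset.sum_const, Finset.card_univ, Fintype.card_fin, smul_eq_mul]
      _ ≤ _ := Finset.sum_le_sum fun b _ => key b
  have h4 : (∑ b, ∑ d ∈ Finset.univ.erase b, (f b + f d)) + 2 * T = n * T + n * T := by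
    have e1 : ∑ b : Fin n, (∑ d ∈ Finset.univ.erase b, (f b + f d) + (f b + f b))
        = ∑ b : Fin n, (n * f b + T) := Finset.sum_congr rfl (fun b _ => h2 b)
    have e2 : ∑ b : Fin n, (∑ d ∈ Finset.univ.erase b, (f b + f d) + (f b + f b))
        = (∑ b, ∑ d ∈ Finset.univ.erase b, (f b + f d)) + 2 * T := by
      rw [Finset.sum_add_distrib]
      congr 1
      rw [Finset.sum_add_distrib, ← hT]
      ring
    have e3 : ∑ b : Fin n, (n * f b + T) = n * T + n * T := by
      rw [Finset.sum_add_distrib, ← Finset.mul_sum, ← hT, Finset.sum_const,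
        Finset.card_univ, Fintype.card_fin, smul_eq_mul]
    rw [← e2, e1, e3]
  -- combine: n*(n-1)*2t + 2T ≤ 2nT, hence (n-1)*2*(n*t) ≤ (n-1)*2*T
  have h5 : n * ((n - 1) * (2 * t)) + 2 * T ≤ n * T + n * T := by
    rw [← h4]; exact Nat.add_le_add_right h3 _
  have h6 : ((n - 1) * 2) * (n * t) ≤ ((n - 1) * 2) * T := by
    have hnn : n * T + n * T = (n - 1) * 2 * T + 2 * T := by
      have : n * 2 = (n - 1) * 2 + 2 := by omega
      calc n * T + n * T = n * 2 * T := by ring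
        _ = ((n - 1) * 2 + 2) * T := by rw [this]
        _ = (n - 1) * 2 * T + 2 * T := by ring
    have h7 : n * ((n - 1) * (2 * t)) = ((n - 1) * 2) * (n * t) := by ring
    linarith
  exact Nat.le_of_mul_le_mul_left h6 (by omega)

/-- Cardinality of an initial segment of `Fin n`. -/
lemma card_initial {n t : ℕ} (ht : t ≤ n) :
    (Finset.univ.filter (fun x : Fin n => x.val < t)).card = t := by
  have h : Finset.univ.filter (fun x : Fin n => x.val < t)
      = (Finset.range t).attachFin (fun m hm => lt_of_lt_of_le (Finset.mem_range.1 hm) ht) := by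
    ext x; simp [Finset.mem_attachFin]
  rw [h, Finset.card_attachFin, Finset.card_range]

lemma card_filter_equiv {α : Type*} [Fintype α] [DecidableEq α] (e : α ≃ α) (P : α → Prop)
    [DecidablePred P] :
    (Finset.univ.filter (fun a => P (e a))).card = (Finset.univ.filter P).card := by
  apply Finset.card_nbij' (fun a => e a) (fun b => e.symm b) <;> intro x hx <;> simp_all

/-- If `n ≥ 3` and `k` is even with `4 ≤ k ≤ 2n`, then `wdim_k(K_n □ K_n) = n·(k/2)`. -/
theorem stmt9 (n k : ℕ) (hn : 3 ≤ n) (hk4 : 4 ≤ k) (hk : k ≤ 2 * n) (hke : Even k) :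
    wdim n n k = n * (k / 2) := by
  classical
  haveI : NeZero n := ⟨by omega⟩
  set t := k / 2 with htdef
  have hkmod : k % 2 = 0 := Nat.even_iff.1 hke
  have hk2 : k = 2 * t := by omega
  have ht2 : 2 ≤ t := by omega
  have htn : t ≤ n := by omega
  -- the construction
  set S0 : Finset (Fin n × Fin n) :=
    Finset.univ.filter (fun p => (p.2 - p.1).val < t) with hS0
  -- row and column counts of S0
  have hrowline : ∀ i : Fin n,
      (Finset.univ.filter (fun j : Fin n => (j - i).val < t)).card = t := by
    intro i
    have := card_filter_equiv (Equiv.subRight i) (fun x : Fin n => x.val < t)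
    simp [Equiv.subRight, card_initial htn] at this
    convert this using 2
    ext x
    exact ⟨fun h => Finset.mem_filter.2 ⟨Finset.mem_univ _, (Finset.mem_filter.1 h).2⟩,
      fun h => Finset.mem_filter.2 ⟨Finset.mem_univ _, (Finset.mem_filter.1 h).2⟩⟩
  have hcolline : ∀ j : Fin n,
      (Finset.univ.filter (fun i : Fin n => (j - i).val < t)).card = t := by
    intro j
    have := card_filter_equiv (Equiv.subLeft j) (fun x : Fin n => x.val < t)
    simp [Equiv.subLeft, card_initial htn] at this
    convert this using 2
    ext x
    exact ⟨fun h => Finset.mem_filter.2 ⟨Finset.mem_univ _, (Finset.mem_filter.1 h).2⟩,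
      fun h => Finset.mem_filter.2 ⟨Finset.mem_univ _, (Finset.mem_filter.1 h).2⟩⟩
  have hrow : ∀ i : Fin n, (S0.filter (fun w => i = w.1)).card = t := by
    intro i
    have himg : S0.filter (fun w => i = w.1)
        = (Finset.univ.filter (fun j : Fin n => (j - i).val < t)).map
            ⟨fun j => (i, j), fun x y h => congrArg Prod.snd h⟩ := by
      ext ⟨p, q⟩
      simp only [hS0, Finset.mem_filter, Finset.mem_univ, true_and, Finset.mem_map,
        Function.Embedding.coeFn_mk, Prod.mk.injEq]
      constructor
      · rintro ⟨hlt, rfl⟩; exact ⟨q, hlt, rfl⟩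
      · rintro ⟨j, hj, h⟩; obtain ⟨rfl, rfl⟩ : i = p ∧ j = q := Prod.mk.inj h; exact ⟨hj, rfl⟩
    rw [himg, Finset.card_map, hrowline]
  have hcol : ∀ j : Fin n, (S0.filter (fun w => j = w.2)).card = t := by
    intro j
    have himg : S0.filter (fun w => j = w.2)
        = (Finset.univ.filter (fun i : Fin n => (j - i).val < t)).map
            ⟨fun i => (i, j), fun x y h => congrArg Prod.fst h⟩ := by
      ext ⟨p, q⟩
      simp only [hS0, Finset.mem_filter, Finset.mem_univ, true_and, Finset.mem_map,
        Function.Embedding.coeFn_mk, Prod.mk.injEq]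
      constructor
      · rintro ⟨hlt, rfl⟩; exact ⟨p, hlt, rfl⟩
      · rintro ⟨i, hi, h⟩; obtain ⟨rfl, rfl⟩ : i = p ∧ j = q := Prod.mk.inj h; exact ⟨hi, rfl⟩
    rw [himg, Finset.card_map, hcolline]
  -- cardinality of S0
  have hcard : S0.card = n * t := by
    have := Finset.card_eq_sum_card_fiberwise
      (f := fun w : Fin n × Fin n => w.1) (s := S0) (t := Finset.univ)
      (fun x _ => Finset.mem_univ _)
    have heach : ∀ i : Fin n, (S0.filter (fun w => w.1 = i)).card = t := by
      intro i
      rw [← hrow i]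
      congr 1
      ext w
      simp [eq_comm]
    rw [this, Finset.sum_congr rfl (fun i _ => heach i), Finset.sum_const,
      Finset.card_univ, Fintype.card_fin, smul_eq_mul]
  -- S0 is weak k-resolving
  have hres : IsWeakResolving k S0 := by
    rintro ⟨a, b⟩ ⟨c, d⟩ hxy
    by_cases hac : a = c
    · subst hac
      have hbd : b ≠ d := fun h => hxy (by rw [h])
      rw [delta_same_row S0 hbd, hcol b, hcol d]
      omega
    · by_cases hbd : b = d
      · subst hbd
        rw [delta_same_col S0 hac, hrow a, hrow c]
        omega
      · have hdg := delta_diag S0 hac hbd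
        rw [hrow a, hrow c, hcol b, hcol d] at hdg
        have hA : (S0.filter (fun w => a = w.1 ∧ d = w.2)).card ≤ 1 := by
          apply Finset.card_le_one.2
          rintro ⟨p, q⟩ hp ⟨p', q'⟩ hq
          simp only [Finset.mem_filter] at hp hq
          obtain ⟨-, rfl, rfl⟩ := hp
          obtain ⟨-, rfl, rfl⟩ := hq
          rfl
        have hB : (S0.filter (fun w => c = w.1 ∧ b = w.2)).card ≤ 1 := by
          apply Finset.card_le_one.2
          rintro ⟨p, q⟩ hp ⟨p', q'⟩ hq
          simp only [Finset.mem_filter] at hp hq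
          obtain ⟨-, rfl, rfl⟩ := hp
          obtain ⟨-, rfl, rfl⟩ := hq
          rfl
        omega
  -- membership
  have hmem : n * t ∈ {c | ∃ S : Finset (Fin n × Fin n), IsWeakResolving k S ∧ S.card = c} :=
    ⟨S0, hres, hcard⟩
  -- lower bound
  have hlow : ∀ c ∈ {c | ∃ S : Finset (Fin n × Fin n), IsWeakResolving k S ∧ S.card = c},
      n * t ≤ c := by
    rintro c ⟨S, hS, rfl⟩
    have hpair : ∀ b d : Fin n, b ≠ d →
        2 * t ≤ (S.filter (fun w => b = w.2)).card + (S.filter (fun w => d = w.2)).card := by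
      intro b d hbd
      have hne : ((0 : Fin n), b) ≠ ((0 : Fin n), d) := by
        simp [Prod.ext_iff, hbd]
      have hh := hS _ _ hne
      rw [delta_same_row S hbd] at hh
      omega
    have hsum := double_count (n := n) (t := t) (by omega)
      (fun j => (S.filter (fun w => j = w.2)).card) hpair
    have hcard' : S.card = ∑ j : Fin n, (S.filter (fun w => j = w.2)).card := by
      have := Finset.card_eq_sum_card_fiberwise
        (f := fun w : Fin n × Fin n => w.2) (s := S) (t := Finset.univ)
        (fun x _ => Finset.mem_univ _)
      rw [this]
      apply Finset.sum_congr rfl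
      intro j _
      congr 1
      ext w
      simp [eq_comm]
    omega
  have h1 : wdim n n k ≤ n * t := Nat.sInf_le hmem
  have h2 : n * t ≤ wdim n n k := hlow _ (Nat.sInf_mem ⟨_, hmem⟩)
  omega
end

section
/- If n ≥ 3, then wdim_3(K_n □ K_n) = 2n. -/
def rc {n m : ℕ} (S : Finset (Fin n × Fin m)) (a : Fin n) : ℕ :=
  (S.filter (fun w => w.1 = a)).card

def cc {n m : ℕ} (S : Finset (Fin n × Fin m)) (b : Fin m) : ℕ :=
  (S.filter (fun w => w.2 = b)).card

lemma deltaCols {n m : ℕ} (S : Finset (Fin n × Fin m)) (a : Fin n) (b d : Fin m)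
    (hbd : b ≠ d) : delta S (a, b) (a, d) = cc S b + cc S d := by
  have hdb := hbd.symm
  have key : ∀ w : Fin n × Fin m,
      (((hd (a,b) w : ℤ) - (hd (a,d) w : ℤ)).natAbs : ℕ)
      = (if w.2 = b then 1 else 0) + (if w.2 = d then 1 else 0) := by
    rintro ⟨u, v⟩
    simp only [hd]
    by_cases h1 : u = a <;> by_cases h2 : v = b <;> by_cases h3 : v = d <;>
      simp_all <;> omega
  unfold delta cc
  rw [Finset.sum_congr rfl fun w _ => key w, Finset.sum_add_distrib,
    Finset.card_filter, Finset.card_filter]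

lemma deltaRows {n m : ℕ} (S : Finset (Fin n × Fin m)) (a c : Fin n) (b : Fin m)
    (hac : a ≠ c) : delta S (a, b) (c, b) = rc S a + rc S c := by
  have hca := hac.symm
  have key : ∀ w : Fin n × Fin m,
      (((hd (a,b) w : ℤ) - (hd (c,b) w : ℤ)).natAbs : ℕ)
      = (if w.1 = a then 1 else 0) + (if w.1 = c then 1 else 0) := by
    rintro ⟨u, v⟩
    simp only [hd]
    by_cases h1 : v = b <;> by_cases h2 : u = a <;> by_cases h3 : u = c <;>
      simp_all <;> omega
  unfold delta rc
  rw [Finset.sum_congr rfl fun w _ => key w, Finset.sum_add_distrib,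
    Finset.card_filter, Finset.card_filter]

lemma deltaGen {n m : ℕ} (S : Finset (Fin n × Fin m)) (a c : Fin n) (b d : Fin m)
    (hac : a ≠ c) (hbd : b ≠ d) :
    (delta S (a, b) (c, d) : ℤ)
      = (rc S a : ℤ) + rc S c + cc S b + cc S d
        - 2 * (if (a, d) ∈ S then 1 else 0) - 2 * (if (c, b) ∈ S then 1 else 0) := by
  have hca := hac.symm
  have hdb := hbd.symm
  have key : ∀ w : Fin n × Fin m,
      (((hd (a,b) w : ℤ) - (hd (c,d) w : ℤ)).natAbs : ℤ)
      = (if w.1 = a then (1:ℤ) else 0) + (if w.1 = c then 1 else 0)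
        + (if w.2 = b then 1 else 0) + (if w.2 = d then 1 else 0)
        - 2 * (if w = (a, d) then 1 else 0) - 2 * (if w = (c, b) then 1 else 0) := by
    rintro ⟨u, v⟩
    simp only [hd, Prod.mk.injEq]
    by_cases h1 : u = a <;> by_cases h2 : u = c <;> by_cases h3 : v = b <;>
      by_cases h4 : v = d <;> simp_all <;> split_ifs <;> simp_all <;> omega
  unfold delta
  rw [Nat.cast_sum, Finset.sum_congr rfl fun w _ => key w]
  rw [Finset.sum_sub_distrib, Finset.sum_sub_distrib, Finset.sum_add_distrib,
    Finset.sum_add_distrib, Finset.sum_add_distrib]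
  rw [Finset.sum_boole, Finset.sum_boole, Finset.sum_boole, Finset.sum_boole,
    ← Finset.mul_sum, ← Finset.mul_sum, Finset.sum_boole, Finset.sum_boole]
  have e1 : S.filter (fun w => w = (a,d)) = if (a,d) ∈ S then {(a,d)} else ∅ :=
    Finset.filter_eq' S (a,d)
  have e2 : S.filter (fun w => w = (c,b)) = if (c,b) ∈ S then {(c,b)} else ∅ :=
    Finset.filter_eq' S (c,b)
  rw [e1, e2]
  unfold rc cc
  split_ifs <;> simp

def S0 (n : ℕ) [NeZero n] : Finset (Fin n × Fin n) :=
  (Finset.univ.image fun i : Fin n => (i, i)) ∪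
  (Finset.univ.image fun i : Fin n => (i, i + 1))

lemma finOne_ne_zero {n : ℕ} [NeZero n] (hn : 3 ≤ n) : (1 : Fin n) ≠ 0 := by
  simp [Fin.ext_iff, Fin.val_one', Fin.val_zero]
  omega

lemma fin_succ_ne {n : ℕ} [NeZero n] (hn : 3 ≤ n) (a : Fin n) : a + 1 ≠ a := by
  intro h
  have : a + 1 = a + 0 := by rw [h, add_zero]
  exact finOne_ne_zero hn (add_left_cancel this)

lemma fin_pred_ne {n : ℕ} [NeZero n] (hn : 3 ≤ n) (a : Fin n) : a - 1 ≠ a := by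
  intro h
  have : a - 1 + 1 = a + 1 := by rw [h]
  rw [sub_add_cancel] at this
  exact fin_succ_ne hn a this.symm

lemma S0_card {n : ℕ} [NeZero n] (hn : 3 ≤ n) : (S0 n).card = 2 * n := by
  unfold S0
  rw [Finset.card_union_of_disjoint, Finset.card_image_of_injective,
    Finset.card_image_of_injective, Finset.card_univ, Fintype.card_fin]
  · ring
  · intro i j h; exact (Prod.mk.injEq .. ▸ h).1
  · intro i j h; exact (Prod.mk.injEq .. ▸ h).1
  · rw [Finset.disjoint_left]
    rintro ⟨u, v⟩ h1 h2
    simp only [Finset.mem_image, Finset.mem_univ, true_and, Prod.mk.injEq] at h1 h2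
    obtain ⟨i, hi1, hi2⟩ := h1
    obtain ⟨j, hj1, hj2⟩ := h2
    subst hi1; subst hi2
    rw [hj1] at hj2
    exact fin_succ_ne hn i hj2

lemma S0_rc {n : ℕ} [NeZero n] (hn : 3 ≤ n) (a : Fin n) : 2 ≤ rc (S0 n) a := by
  have h1 : (a, a) ∈ (S0 n).filter (fun w => w.1 = a) := by
    simp [S0, Finset.mem_filter]
  have h2 : (a, a + 1) ∈ (S0 n).filter (fun w => w.1 = a) := by
    simp [S0, Finset.mem_filter]
  have hsub : ({(a, a), (a, a + 1)} : Finset (Fin n × Fin n)) ⊆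
      (S0 n).filter (fun w => w.1 = a) := by
    intro w hw
    simp only [Finset.mem_insert, Finset.mem_singleton] at hw
    rcases hw with h | h <;> subst h <;> assumption
  have hcard : ({(a, a), (a, a + 1)} : Finset (Fin n × Fin n)).card = 2 := by
    rw [Finset.card_insert_of_notMem, Finset.card_singleton]
    simp only [Finset.mem_singleton, Prod.mk.injEq, not_and]
    intro _ h
    exact fin_succ_ne hn a h.symm
  calc 2 = ({(a, a), (a, a + 1)} : Finset (Fin n × Fin n)).card := hcard.symm
    _ ≤ _ := Finset.card_le_card hsub

lemma S0_cc {n : ℕ} [NeZero n] (hn : 3 ≤ n) (b : Fin n) : 2 ≤ cc (S0 n) b := by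
  have h1 : (b, b) ∈ (S0 n).filter (fun w => w.2 = b) := by
    simp [S0, Finset.mem_filter]
  have h2 : (b - 1, b) ∈ (S0 n).filter (fun w => w.2 = b) := by
    exact Finset.mem_filter.mpr ⟨Finset.mem_union_right _
      (Finset.mem_image.mpr ⟨b - 1, Finset.mem_univ _, by rw [sub_add_cancel]⟩), rfl⟩
  have hsub : ({(b, b), (b - 1, b)} : Finset (Fin n × Fin n)) ⊆
      (S0 n).filter (fun w => w.2 = b) := by
    intro w hw
    simp only [Finset.mem_insert, Finset.mem_singleton] at hw
    rcases hw with h | h <;> subst h <;> assumption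
  have hcard : ({(b, b), (b - 1, b)} : Finset (Fin n × Fin n)).card = 2 := by
    rw [Finset.card_insert_of_notMem, Finset.card_singleton]
    simp only [Finset.mem_singleton, Prod.mk.injEq, and_true]
    intro h
    exact fin_pred_ne hn b h.symm
  calc 2 = ({(b, b), (b - 1, b)} : Finset (Fin n × Fin n)).card := hcard.symm
    _ ≤ _ := Finset.card_le_card hsub

lemma S0_resolving {n : ℕ} [NeZero n] (hn : 3 ≤ n) : IsWeakResolving 3 (S0 n) := by
  rintro ⟨a, b⟩ ⟨c, d⟩ hxy
  by_cases hac : a = c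
  · subst hac
    have hbd : b ≠ d := fun h => hxy (by rw [h])
    rw [deltaCols _ _ _ _ hbd]
    have := S0_cc hn b; have := S0_cc hn d; omega
  · by_cases hbd : b = d
    · subst hbd
      rw [deltaRows _ _ _ _ hac]
      have := S0_rc hn a; have := S0_rc hn c; omega
    · have h := deltaGen (S0 n) a c b d hac hbd
      have h1 := S0_rc hn a; have h2 := S0_rc hn c
      have h3 := S0_cc hn b; have h4 := S0_cc hn d
      have : (3 : ℤ) ≤ (delta (S0 n) (a, b) (c, d) : ℤ) := by
        rw [h]; split_ifs <;> push_cast <;> omega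
      exact_mod_cast this

lemma struct {n : ℕ} (hn : 3 ≤ n) (r : Fin n → ℕ)
    (hpair : ∀ a c : Fin n, a ≠ c → 3 ≤ r a + r c)
    (hsum : (∑ a, r a) + 1 ≤ 2 * n) :
    ∃ u0 : Fin n, r u0 = 1 ∧ ∀ c : Fin n, c ≠ u0 → r c = 2 := by
  -- find a light row
  have hexists : ∃ u0 : Fin n, r u0 ≤ 1 := by
    by_contra hno
    push_neg at hno
    have h2 : ∀ a ∈ (Finset.univ : Finset (Fin n)), 2 ≤ r a := fun a _ => hno a
    have := Finset.sum_le_sum h2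
    rw [Finset.sum_const, Finset.card_univ, Fintype.card_fin, smul_eq_mul] at this
    omega
  obtain ⟨u0, hu0⟩ := hexists
  have hne0 : r u0 ≠ 0 := by
    intro h0
    have h3 : ∀ c ∈ Finset.univ.erase u0, 3 ≤ r c := by
      intro c hc
      have hcu : c ≠ u0 := (Finset.mem_erase.mp hc).1
      have := hpair c u0 hcu
      omega
    have hle := Finset.sum_le_sum h3
    rw [Finset.sum_const, Finset.card_erase_of_mem (Finset.mem_univ u0),
      Finset.card_univ, Fintype.card_fin, smul_eq_mul] at hle
    have hsub : (∑ c ∈ Finset.univ.erase u0, r c) ≤ ∑ a, r a :=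
      Finset.sum_le_sum_of_subset (Finset.erase_subset _ _)
    omega
  have hr1 : r u0 = 1 := by omega
  refine ⟨u0, hr1, fun c hc => ?_⟩
  have hlow : 2 ≤ r c := by have := hpair u0 c (Ne.symm hc); omega
  -- upper bound
  have hsplit : ∑ a, r a = (∑ a ∈ Finset.univ \ {u0, c}, r a) + (r u0 + r c) := by
    rw [← Finset.sum_pair (Ne.symm hc)]
    exact (Finset.sum_sdiff (Finset.subset_univ _)).symm
  have hrest : 2 * (n - 2) ≤ ∑ a ∈ Finset.univ \ {u0, c}, r a := by
    have h2 : ∀ a ∈ Finset.univ \ {u0, c}, 2 ≤ r a := by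
      intro a ha
      have h := Finset.mem_sdiff.mp ha
      have hau : a ≠ u0 := by
        intro h'; exact h.2 (by simp [h'])
      have := hpair a u0 hau
      omega
    have := Finset.sum_le_sum h2
    rw [Finset.sum_const, smul_eq_mul] at this
    have hcard : (Finset.univ \ {u0, c}).card = n - 2 := by
      rw [Finset.card_sdiff_of_subset (Finset.subset_univ _), Finset.card_univ, Fintype.card_fin,
        Finset.card_pair (Ne.symm hc)]
    rw [hcard] at this
    omega
  omega

lemma lower_bound {n : ℕ} (hn : 3 ≤ n) (S : Finset (Fin n × Fin n))
    (hres : IsWeakResolving 3 S) : 2 * n ≤ S.card := by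
  by_contra hcon
  push_neg at hcon
  have a0 : Fin n := ⟨0, by omega⟩
  have hpairR : ∀ a c : Fin n, a ≠ c → 3 ≤ rc S a + rc S c := by
    intro a c hac
    have h := hres (a, a0) (c, a0) (by simp [Prod.ext_iff, hac])
    rwa [deltaRows _ _ _ _ hac] at h
  have hpairC : ∀ b d : Fin n, b ≠ d → 3 ≤ cc S b + cc S d := by
    intro b d hbd
    have h := hres (a0, b) (a0, d) (by simp [Prod.ext_iff, hbd])
    rwa [deltaCols _ _ _ _ hbd] at h
  have hsumR : ∑ a, rc S a = S.card :=
    (Finset.card_eq_sum_card_fiberwise (fun x _ => Finset.mem_univ x.1)).symm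
  have hsumC : ∑ b, cc S b = S.card :=
    (Finset.card_eq_sum_card_fiberwise (fun x _ => Finset.mem_univ x.2)).symm
  obtain ⟨u0, hru0, hrow⟩ := struct hn (rc S) hpairR (by omega)
  obtain ⟨v0, hcv0, hcol⟩ := struct hn (cc S) hpairC (by omega)
  -- the unique point in row u0
  obtain ⟨w0, hw0⟩ := Finset.card_eq_one.mp hru0
  have hw0mem : w0 ∈ S.filter (fun w => w.1 = u0) := by
    rw [hw0]; exact Finset.mem_singleton_self w0
  have hw0S : w0 ∈ S := (Finset.mem_filter.mp hw0mem).1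
  have hw01 : w0.1 = u0 := (Finset.mem_filter.mp hw0mem).2
  have hw0uniq : ∀ w ∈ S, w.1 = u0 → w = w0 := by
    intro w hwS hw1
    have : w ∈ S.filter (fun w => w.1 = u0) := Finset.mem_filter.mpr ⟨hwS, hw1⟩
    rw [hw0] at this
    exact Finset.mem_singleton.mp this
  -- the unique point in column v0
  obtain ⟨w1, hw1⟩ := Finset.card_eq_one.mp hcv0
  have hw1mem : w1 ∈ S.filter (fun w => w.2 = v0) := by
    rw [hw1]; exact Finset.mem_singleton_self w1
  have hw1S : w1 ∈ S := (Finset.mem_filter.mp hw1mem).1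
  have hw12 : w1.2 = v0 := (Finset.mem_filter.mp hw1mem).2
  have hw1uniq : ∀ w ∈ S, w.2 = v0 → w = w1 := by
    intro w hwS hw2
    have : w ∈ S.filter (fun w => w.2 = v0) := Finset.mem_filter.mpr ⟨hwS, hw2⟩
    rw [hw1] at this
    exact Finset.mem_singleton.mp this
  by_cases hcase : w0.2 = v0
  · -- w0 = (u0, v0) is the unique light point; pick z in another row
    obtain ⟨u1, hu1⟩ : ∃ u1 : Fin n, u1 ≠ u0 :=
      ⟨⟨if u0.val = 0 then 1 else 0, by split_ifs <;> omega⟩, by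
        intro h
        have h2 := congrArg Fin.val h
        simp only at h2
        split_ifs at h2 <;> omega⟩
    have hrcu1 : rc S u1 = 2 := hrow _ hu1
    have hne : (S.filter (fun w => w.1 = u1)).Nonempty := by
      rw [← Finset.card_pos]
      unfold rc at hrcu1
      omega
    obtain ⟨z, hz⟩ := hne
    have hzS : z ∈ S := (Finset.mem_filter.mp hz).1
    have hz1 : z.1 = u1 := (Finset.mem_filter.mp hz).2
    have hz1' : z.1 ≠ u0 := by rw [hz1]; exact hu1
    have hz2 : z.2 ≠ v0 := by
      intro h
      have hzw1 : z = w1 := hw1uniq z hzS h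
      have hw0w1 : w0 = w1 := hw1uniq w0 hw0S hcase
      rw [hzw1, ← hw0w1, hw01] at hz1'
      exact hz1' rfl
    have hkey := deltaGen S u0 z.1 z.2 v0 (Ne.symm hz1') hz2
    have hmem1 : (u0, v0) ∈ S := by
      have : (u0, v0) = w0 := by rw [← hw01, ← hcase]
      rw [this]; exact hw0S
    have hmem2 : (z.1, z.2) ∈ S := by rw [Prod.mk.eta]; exact hzS
    rw [if_pos hmem1, if_pos hmem2] at hkey
    have hres3 := hres (u0, z.2) (z.1, v0) (by
      intro h
      exact hz1' (by rw [Prod.ext_iff] at h; exact h.1.symm))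
    have hrc1 : rc S u0 = 1 := hru0
    have hrc2 : rc S z.1 = 2 := by rw [hz1]; exact hrcu1
    have hcc1 : cc S v0 = 1 := hcv0
    have hcc2 : cc S z.2 = 2 := hcol _ hz2
    rw [hrc1, hrc2, hcc1, hcc2] at hkey
    omega
  · -- w0.2 ≠ v0
    have hw11 : w1.1 ≠ u0 := by
      intro h
      have := hw0uniq w1 hw1S h
      rw [this] at hw12
      exact hcase hw12
    have hkey := deltaGen S u0 w1.1 v0 w0.2 (Ne.symm hw11) (fun h => hcase h.symm)
    have hmem1 : (u0, w0.2) ∈ S := by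
      have : (u0, w0.2) = w0 := by rw [← hw01]
      rw [this]; exact hw0S
    have hmem2 : (w1.1, v0) ∈ S := by
      have : (w1.1, v0) = w1 := by rw [← hw12]
      rw [this]; exact hw1S
    rw [if_pos hmem1, if_pos hmem2] at hkey
    have hres3 := hres (u0, v0) (w1.1, w0.2) (by
      intro h
      exact hw11 (by rw [Prod.ext_iff] at h; exact h.1.symm))
    have hrc1 : rc S u0 = 1 := hru0
    have hrc2 : rc S w1.1 = 2 := hrow _ hw11
    have hcc1 : cc S v0 = 1 := hcv0
    have hcc2 : cc S w0.2 = 2 := hcol _ hcase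
    rw [hrc1, hrc2, hcc1, hcc2] at hkey
    omega

/-- If `n ≥ 3`, then `wdim_3(K_n □ K_n) = 2n`. -/
theorem stmt12 (n : ℕ) (hn : 3 ≤ n) : wdim n n 3 = 2 * n := by
  haveI : NeZero n := ⟨by omega⟩
  have hmem : 2 * n ∈ {c | ∃ S : Finset (Fin n × Fin n), IsWeakResolving 3 S ∧ S.card = c} :=
    ⟨S0 n, S0_resolving hn, S0_card hn⟩
  unfold wdim
  apply le_antisymm
  · exact Nat.sInf_le hmem
  · apply le_csInf ⟨_, hmem⟩
    rintro c ⟨S, hres, rfl⟩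
    exact lower_bound hn S hres
end

section
/- If n ≥ 3 and Y is a weak 3-resolving set of K_n □ K_n with |Y| ≤ 2n−1, then every horizontal layer and every vertical layer of K_n □ K_n contains at least one vertex of Y. -/
lemma key (n : ℕ) (hn : 3 ≤ n) (Y : Finset (Fin n × Fin n))
    (hY : IsWeakResolving 3 Y) (hcard : Y.card ≤ 2 * n - 1)
    (j : Fin n) (hemp : ∀ p ∈ Y, p.2 ≠ j) : False := by
  have hpos : 0 < n := by omega
  have hdel : ∀ j' : Fin n, j' ≠ j → 3 ≤ (Y.filter (fun p => p.2 = j')).card := by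
    intro j' hj'
    have hne : ((⟨0, hpos⟩ : Fin n), j) ≠ ((⟨0, hpos⟩ : Fin n), j') := by
      simp [Ne.symm hj']
    have h3 := hY _ _ hne
    calc 3 ≤ delta Y (⟨0, hpos⟩, j) (⟨0, hpos⟩, j') := h3
      _ = (Y.filter (fun p => p.2 = j')).card := by
        rw [Finset.card_filter, delta]
        apply Finset.sum_congr rfl
        intro w hw
        have hw2 : ¬ (j = w.2) := fun hh => hemp w hw hh.symm
        simp only [hd, if_neg hw2]
        by_cases h1 : (⟨0, hpos⟩ : Fin n) = w.1 <;> by_cases h2 : j' = w.2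
        · simp [← h1, ← h2]
        · simp [← h1, h2, Ne.symm h2]
        · simp [h1, ← h2]
        · simp [h1, h2, Ne.symm h2]
  have hfib : Y.card = ∑ j' : Fin n, (Y.filter (fun p => p.2 = j')).card :=
    Finset.card_eq_sum_card_fiberwise (by simp)
  have hsub : ∑ j' ∈ Finset.univ.erase j, (Y.filter (fun p => p.2 = j')).card
      ≤ ∑ j' : Fin n, (Y.filter (fun p => p.2 = j')).card :=
    Finset.sum_le_sum_of_subset (Finset.erase_subset _ _)
  have hlow : 3 * (n - 1) ≤ ∑ j' ∈ Finset.univ.erase j, (Y.filter (fun p => p.2 = j')).card := by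
    have := Finset.sum_le_sum (s := Finset.univ.erase j)
      (f := fun _ => 3) (g := fun j' => (Y.filter (fun p => p.2 = j')).card)
      (fun j' hj' => hdel j' (Finset.ne_of_mem_erase hj'))
    simpa [Finset.card_erase_of_mem, mul_comm] using this
  omega

/-- If `n ≥ 3` and `Y` is a weak `3`-resolving set of `K_n □ K_n` with `|Y| ≤ 2n−1`,
then every horizontal layer and every vertical layer contains a vertex of `Y`. -/
theorem stmt13 (n : ℕ) (hn : 3 ≤ n) (Y : Finset (Fin n × Fin n))
    (hY : IsWeakResolving 3 Y) (hcard : Y.card ≤ 2 * n - 1) :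
    (∀ j : Fin n, ∃ p ∈ Y, p.2 = j) ∧ (∀ i : Fin n, ∃ p ∈ Y, p.1 = i) := by
  have hswap : ∀ (x w : Fin n × Fin n), hd x.swap w.swap = hd x w := by
    intro x w; simp [hd, Prod.swap]; ring
  constructor
  · intro j
    by_contra h
    push_neg at h
    exact key n hn Y hY hcard j h
  · intro i
    by_contra h
    push_neg at h
    set Y' := Y.image Prod.swap with hY'def
    have hinj : Function.Injective (Prod.swap : Fin n × Fin n → Fin n × Fin n) :=
      Prod.swap_injective
    have hY' : IsWeakResolving 3 Y' := by
      intro x y hxy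
      have : delta Y' x y = delta Y x.swap y.swap := by
        rw [delta, delta, Finset.sum_image (fun a _ b _ h => hinj h)]
        apply Finset.sum_congr rfl
        intro w hw
        rw [← hswap x w.swap, ← hswap y w.swap, Prod.swap_swap]
      rw [this]
      exact hY _ _ (fun hh => hxy (by simpa using congrArg Prod.swap hh))
    have hcard' : Y'.card ≤ 2 * n - 1 := by
      rw [hY'def, Finset.card_image_of_injective _ hinj]; exact hcard
    refine key n hn Y' hY' hcard' i ?_
    intro p hp
    rw [hY'def, Finset.mem_image] at hp
    obtain ⟨q, hq, rfl⟩ := hp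
    exact h q hq
end

section
/- If n ≥ 3, then wdim_2(K_n □ K_n) = ⌈4n/3⌉. -/
namespace W14


variable {n m : ℕ}

def rr (S : Finset (Fin n × Fin m)) (a : Fin n) : ℕ := (S.filter fun w => w.1 = a).card
def ss (S : Finset (Fin n × Fin m)) (c : Fin m) : ℕ := (S.filter fun w => w.2 = c).card

lemma delta_int (S : Finset (Fin n × Fin m)) (x y : Fin n × Fin m) :
    (delta S x y : ℤ) = ∑ w ∈ S, |(hd x w : ℤ) - (hd y w : ℤ)| := by
  unfold delta
  push_cast
  rfl

lemma term_cross (x y w : Fin n × Fin m) (hx : x.1 ≠ y.1) (hy : x.2 ≠ y.2) :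
    |(hd x w : ℤ) - (hd y w : ℤ)|
      = (if w.1 = x.1 then 1 else 0) + (if w.1 = y.1 then 1 else 0)
        + (if w.2 = x.2 then 1 else 0) + (if w.2 = y.2 then 1 else 0)
        - 2 * (if w = (x.1, y.2) then 1 else 0) - 2 * (if w = (y.1, x.2) then 1 else 0) := by
  rcases eq_or_ne w.1 x.1 with h1 | h1 <;> rcases eq_or_ne w.1 y.1 with h2 | h2 <;>
    rcases eq_or_ne w.2 x.2 with h3 | h3 <;> rcases eq_or_ne w.2 y.2 with h4 | h4 <;>
    simp_all [hd, Prod.ext_iff, eq_comm] <;> norm_num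




variable {n m : ℕ}

lemma delta_cross (S : Finset (Fin n × Fin m)) (x y : Fin n × Fin m)
    (hx : x.1 ≠ y.1) (hy : x.2 ≠ y.2) :
    (delta S x y : ℤ) = rr S x.1 + rr S y.1 + ss S x.2 + ss S y.2
      - 2 * (if (x.1, y.2) ∈ S then 1 else 0) - 2 * (if (y.1, x.2) ∈ S then 1 else 0) := by
  rw [delta_int, Finset.sum_congr rfl (fun w _ => term_cross x y w hx hy)]
  simp only [Finset.sum_sub_distrib, Finset.sum_add_distrib, ← Finset.mul_sum,
    Finset.sum_boole, rr, ss, Finset.filter_eq', apply_ite Finset.card]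
  push_cast
  split_ifs <;> simp <;> ring

lemma term_row (x y w : Fin n × Fin m) (hx : x.1 = y.1) (hy : x.2 ≠ y.2) :
    ((hd x w : ℤ) - (hd y w : ℤ)).natAbs
      = (if w.2 = x.2 then 1 else 0) + (if w.2 = y.2 then 1 else 0) := by
  rcases eq_or_ne w.2 x.2 with h3 | h3 <;> rcases eq_or_ne w.2 y.2 with h4 | h4 <;>
    simp_all [hd, eq_comm]

lemma delta_row (S : Finset (Fin n × Fin m)) (x y : Fin n × Fin m)
    (hx : x.1 = y.1) (hy : x.2 ≠ y.2) :
    delta S x y = ss S x.2 + ss S y.2 := by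
  unfold delta
  rw [Finset.sum_congr rfl (fun w _ => term_row x y w hx hy)]
  simp [Finset.sum_add_distrib, Finset.sum_boole, ss]

lemma term_col (x y w : Fin n × Fin m) (hx : x.1 ≠ y.1) (hy : x.2 = y.2) :
    ((hd x w : ℤ) - (hd y w : ℤ)).natAbs
      = (if w.1 = x.1 then 1 else 0) + (if w.1 = y.1 then 1 else 0) := by
  rcases eq_or_ne w.1 x.1 with h3 | h3 <;> rcases eq_or_ne w.1 y.1 with h4 | h4 <;>
    simp_all [hd, eq_comm]

lemma delta_col (S : Finset (Fin n × Fin m)) (x y : Fin n × Fin m)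
    (hx : x.1 ≠ y.1) (hy : x.2 = y.2) :
    delta S x y = rr S x.1 + rr S y.1 := by
  unfold delta
  rw [Finset.sum_congr rfl (fun w _ => term_col x y w hx hy)]
  simp [Finset.sum_add_distrib, Finset.sum_boole, rr]



lemma rr_pos (S : Finset (Fin n × Fin m)) (a : Fin n) (h : ∃ w ∈ S, w.1 = a) : 1 ≤ rr S a := by
  obtain ⟨w, hw, hw1⟩ := h
  exact Finset.card_pos.mpr ⟨w, Finset.mem_filter.mpr ⟨hw, hw1⟩⟩

lemma ss_pos (S : Finset (Fin n × Fin m)) (c : Fin m) (h : ∃ w ∈ S, w.2 = c) : 1 ≤ ss S c := by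
  obtain ⟨w, hw, hw2⟩ := h
  exact Finset.card_pos.mpr ⟨w, Finset.mem_filter.mpr ⟨hw, hw2⟩⟩

lemma rr_two (S : Finset (Fin n × Fin m)) (a : Fin n)
    (h : ∃ w ∈ S, ∃ w' ∈ S, w ≠ w' ∧ w.1 = a ∧ w'.1 = a) : 2 ≤ rr S a := by
  obtain ⟨w, hw, w', hw', hne, h1, h2⟩ := h
  exact Finset.one_lt_card_iff.mpr ⟨w, w', Finset.mem_filter.mpr ⟨hw, h1⟩,
    Finset.mem_filter.mpr ⟨hw', h2⟩, hne⟩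

lemma ss_two (S : Finset (Fin n × Fin m)) (c : Fin m)
    (h : ∃ w ∈ S, ∃ w' ∈ S, w ≠ w' ∧ w.2 = c ∧ w'.2 = c) : 2 ≤ ss S c := by
  obtain ⟨w, hw, w', hw', hne, h1, h2⟩ := h
  exact Finset.one_lt_card_iff.mpr ⟨w, w', Finset.mem_filter.mpr ⟨hw, h1⟩,
    Finset.mem_filter.mpr ⟨hw', h2⟩, hne⟩

/-- sufficiency criterion -/
lemma isWeakResolving_of (S : Finset (Fin n × Fin m))
    (hrow : ∀ a : Fin n, ∃ w ∈ S, w.1 = a)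
    (hcol : ∀ c : Fin m, ∃ w ∈ S, w.2 = c)
    (hpart : ∀ w ∈ S, ∃ w' ∈ S, w' ≠ w ∧ (w'.1 = w.1 ∨ w'.2 = w.2)) :
    IsWeakResolving 2 S := by
  intro x y hxy
  rcases eq_or_ne x.1 y.1 with h1 | h1
  · rcases eq_or_ne x.2 y.2 with h2 | h2
    · exact absurd (Prod.ext h1 h2) hxy
    · rw [delta_row S x y h1 h2]
      have := ss_pos S x.2 (hcol x.2)
      have := ss_pos S y.2 (hcol y.2)
      omega
  · rcases eq_or_ne x.2 y.2 with h2 | h2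
    · rw [delta_col S x y h1 h2]
      have := rr_pos S x.1 (hrow x.1)
      have := rr_pos S y.1 (hrow y.1)
      omega
    · -- cross case
      have key : ∀ a : Fin n, ∀ c : Fin m,
          (3 : ℤ) ≤ rr S a + ss S c - 2 * (if (a, c) ∈ S then 1 else 0) + 2 := by
        intro a c
        by_cases hm : (a, c) ∈ S
        · obtain ⟨w', hw'S, hne, hor⟩ := hpart (a, c) hm
          have h3 : 3 ≤ rr S a + ss S c := by
            rcases hor with h | h
            · have h2' : 2 ≤ rr S a := rr_two S a ⟨(a,c), hm, w', hw'S, (Ne.symm hne), rfl, h⟩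
              have := ss_pos S c ⟨(a,c), hm, rfl⟩
              omega
            · have h2' : 2 ≤ ss S c := ss_two S c ⟨(a,c), hm, w', hw'S, (Ne.symm hne), rfl, h⟩
              have := rr_pos S a ⟨(a,c), hm, rfl⟩
              omega
          simp only [hm, if_pos]
          push_cast
          omega
        · have := rr_pos S a (hrow a)
          have := ss_pos S c (hcol c)
          simp only [hm, if_neg, if_false]
          push_cast
          omega
      have hd := delta_cross S x y h1 h2
      have k1 := key x.1 y.2
      have k2 := key y.1 x.2
      have : (2 : ℤ) ≤ (delta S x y : ℤ) := by rw [hd]; linarith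
      exact_mod_cast this




def blockSet (k : ℕ) : Finset (ℕ × ℕ) :=
  (Finset.range k).biUnion fun q =>
    {(3*q, 3*q), (3*q, 3*q+1), (3*q+1, 3*q+2), (3*q+2, 3*q+2)}

def tailSet (n : ℕ) : Finset (ℕ × ℕ) :=
  if n % 3 = 0 then ∅
  else if n % 3 = 1 then {(3*(n/3), 3*(n/3)), (3*(n/3), 0)}
  else {(3*(n/3), 3*(n/3)), (3*(n/3), 3*(n/3)+1), (3*(n/3)+1, 3*(n/3)+1)}

def fullSet (n : ℕ) : Finset (ℕ × ℕ) := blockSet (n/3) ∪ tailSet n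

lemma mem_blockSet {k : ℕ} {p : ℕ × ℕ} :
    p ∈ blockSet k ↔ ∃ q < k, p = (3*q, 3*q) ∨ p = (3*q, 3*q+1) ∨
      p = (3*q+1, 3*q+2) ∨ p = (3*q+2, 3*q+2) := by
  simp [blockSet]

lemma blockSet_fst {k : ℕ} {p : ℕ × ℕ} (h : p ∈ blockSet k) : p.1 < 3 * k := by
  rw [mem_blockSet] at h
  obtain ⟨q, hq, h⟩ := h
  rcases h with h | h | h | h <;> subst h <;> simp <;> omega

lemma card_blockSet (k : ℕ) : (blockSet k).card = 4 * k := by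
  rw [blockSet, Finset.card_biUnion]
  · have : ∀ q : ℕ, ({(3*q, 3*q), (3*q, 3*q+1), (3*q+1, 3*q+2), (3*q+2, 3*q+2)} :
        Finset (ℕ × ℕ)).card = 4 := by
      intro q
      rw [Finset.card_insert_of_notMem (by simp [Prod.ext_iff]; try omega),
        Finset.card_insert_of_notMem (by simp [Prod.ext_iff]; try omega),
        Finset.card_insert_of_notMem (by simp [Prod.ext_iff]; try omega),
        Finset.card_singleton]
    simp [this, Finset.sum_const]
    ring
  · intro q hq q' hq' hne
    rw [Function.onFun, Finset.disjoint_left]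
    intro p hp hp'
    simp only [Finset.mem_insert, Finset.mem_singleton] at hp hp'
    rcases hp with h | h | h | h <;> rcases hp' with h' | h' | h' | h' <;>
      rw [h'] at h <;> simp [Prod.ext_iff] at h <;> omega

lemma card_fullSet (n : ℕ) (hn : 3 ≤ n) : (fullSet n).card = (4 * n + 2) / 3 := by
  have hd : Disjoint (blockSet (n/3)) (tailSet n) := by
    rw [Finset.disjoint_left]
    intro p hp hp'
    have h1 := blockSet_fst hp
    unfold tailSet at hp'
    split_ifs at hp' <;> simp [Prod.ext_iff] at hp' <;> omega
  rw [fullSet, Finset.card_union_of_disjoint hd, card_blockSet]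
  have hm := Nat.div_add_mod n 3
  have h3 : n % 3 = 0 ∨ n % 3 = 1 ∨ n % 3 = 2 := by omega
  unfold tailSet
  rcases h3 with h | h | h <;> simp only [h] <;> norm_num
  · omega
  · rw [Finset.card_insert_of_notMem (by simp [Prod.ext_iff]; omega), Finset.card_singleton]
    omega
  · omega





lemma mem_tailSet {n : ℕ} {p : ℕ × ℕ} (h : p ∈ tailSet n) :
    (n % 3 = 1 ∧ (p = (3*(n/3), 3*(n/3)) ∨ p = (3*(n/3), 0))) ∨
    (n % 3 = 2 ∧ (p = (3*(n/3), 3*(n/3)) ∨ p = (3*(n/3), 3*(n/3)+1) ∨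
      p = (3*(n/3)+1, 3*(n/3)+1))) := by
  unfold tailSet at h
  split_ifs at h with h1 h2 <;> simp_all <;> omega

lemma fullSet_bounds {n : ℕ} (hn : 3 ≤ n) {p : ℕ × ℕ} (h : p ∈ fullSet n) :
    p.1 < n ∧ p.2 < n := by
  rw [fullSet, Finset.mem_union] at h
  have hm := Nat.div_add_mod n 3
  rcases h with h | h
  · rw [mem_blockSet] at h
    obtain ⟨q, hq, h⟩ := h
    rcases h with h | h | h | h <;> subst h <;> simp <;> omega
  · rcases mem_tailSet h with ⟨h1, h⟩ | ⟨h1, h⟩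
    · rcases h with h | h <;> subst h <;> simp <;> omega
    · rcases h with h | h | h <;> subst h <;> simp <;> omega

lemma rowCover {n : ℕ} (hn : 3 ≤ n) (a : ℕ) (ha : a < n) :
    ∃ p ∈ fullSet n, p.1 = a := by
  have hm := Nat.div_add_mod n 3
  by_cases hblk : a < 3 * (n / 3)
  · have hq : a / 3 < n / 3 := by omega
    have ht : a % 3 = 0 ∨ a % 3 = 1 ∨ a % 3 = 2 := by omega
    have hqa := Nat.div_add_mod a 3
    rcases ht with h | h | h
    · exact ⟨(3*(a/3), 3*(a/3)), by
        rw [fullSet, Finset.mem_union]; left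
        exact mem_blockSet.mpr ⟨a/3, hq, Or.inl rfl⟩, by omega⟩
    · exact ⟨(3*(a/3)+1, 3*(a/3)+2), by
        rw [fullSet, Finset.mem_union]; left
        exact mem_blockSet.mpr ⟨a/3, hq, Or.inr (Or.inr (Or.inl rfl))⟩, by omega⟩
    · exact ⟨(3*(a/3)+2, 3*(a/3)+2), by
        rw [fullSet, Finset.mem_union]; left
        exact mem_blockSet.mpr ⟨a/3, hq, Or.inr (Or.inr (Or.inr rfl))⟩, by omega⟩
  · have h1 : n % 3 = 1 ∨ n % 3 = 2 := by omega
    rcases h1 with h | h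
    · have : a = 3 * (n/3) := by omega
      exact ⟨(3*(n/3), 3*(n/3)), by
        rw [fullSet, Finset.mem_union]; right
        simp [tailSet, h], by omega⟩
    · have : a = 3 * (n/3) ∨ a = 3 * (n/3) + 1 := by omega
      rcases this with h2 | h2
      · exact ⟨(3*(n/3), 3*(n/3)), by
          rw [fullSet, Finset.mem_union]; right
          simp [tailSet, h], by omega⟩
      · exact ⟨(3*(n/3)+1, 3*(n/3)+1), by
          rw [fullSet, Finset.mem_union]; right
          simp [tailSet, h], by omega⟩

lemma colCover {n : ℕ} (hn : 3 ≤ n) (c : ℕ) (hc : c < n) :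
    ∃ p ∈ fullSet n, p.2 = c := by
  have hm := Nat.div_add_mod n 3
  by_cases hblk : c < 3 * (n / 3)
  · have hq : c / 3 < n / 3 := by omega
    have ht : c % 3 = 0 ∨ c % 3 = 1 ∨ c % 3 = 2 := by omega
    have hqa := Nat.div_add_mod c 3
    rcases ht with h | h | h
    · exact ⟨(3*(c/3), 3*(c/3)), by
        rw [fullSet, Finset.mem_union]; left
        exact mem_blockSet.mpr ⟨c/3, hq, Or.inl rfl⟩, by omega⟩
    · exact ⟨(3*(c/3), 3*(c/3)+1), by
        rw [fullSet, Finset.mem_union]; left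
        exact mem_blockSet.mpr ⟨c/3, hq, Or.inr (Or.inl rfl)⟩, by omega⟩
    · exact ⟨(3*(c/3)+1, 3*(c/3)+2), by
        rw [fullSet, Finset.mem_union]; left
        exact mem_blockSet.mpr ⟨c/3, hq, Or.inr (Or.inr (Or.inl rfl))⟩, by omega⟩
  · have h1 : n % 3 = 1 ∨ n % 3 = 2 := by omega
    rcases h1 with h | h
    · have : c = 3 * (n/3) := by omega
      exact ⟨(3*(n/3), 3*(n/3)), by
        rw [fullSet, Finset.mem_union]; right
        simp [tailSet, h], by omega⟩
    · have : c = 3 * (n/3) ∨ c = 3 * (n/3) + 1 := by omega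
      rcases this with h2 | h2
      · exact ⟨(3*(n/3), 3*(n/3)), by
          rw [fullSet, Finset.mem_union]; right
          simp [tailSet, h], by omega⟩
      · exact ⟨(3*(n/3), 3*(n/3)+1), by
          rw [fullSet, Finset.mem_union]; right
          simp [tailSet, h], by omega⟩

lemma partner {n : ℕ} (hn : 3 ≤ n) {p : ℕ × ℕ} (h : p ∈ fullSet n) :
    ∃ p' ∈ fullSet n, p' ≠ p ∧ (p'.1 = p.1 ∨ p'.2 = p.2) := by
  have hm := Nat.div_add_mod n 3
  have hblkmem : ∀ q, q < n/3 → ∀ x ∈ ({(3*q, 3*q), (3*q, 3*q+1), (3*q+1, 3*q+2),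
      (3*q+2, 3*q+2)} : Finset (ℕ × ℕ)), x ∈ fullSet n := by
    intro q hq x hx
    rw [fullSet, Finset.mem_union]; left
    rw [blockSet, Finset.mem_biUnion]
    exact ⟨q, Finset.mem_range.mpr hq, hx⟩
  have htailmem : ∀ x ∈ tailSet n, x ∈ fullSet n := by
    intro x hx; rw [fullSet, Finset.mem_union]; right; exact hx
  rw [fullSet, Finset.mem_union] at h
  rcases h with h | h
  · rw [mem_blockSet] at h
    obtain ⟨q, hq, h⟩ := h
    rcases h with h | h | h | h <;> subst h
    · exact ⟨(3*q, 3*q+1), hblkmem q hq _ (by simp), by simp [Prod.ext_iff], Or.inl rfl⟩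
    · exact ⟨(3*q, 3*q), hblkmem q hq _ (by simp), by simp [Prod.ext_iff], Or.inl rfl⟩
    · exact ⟨(3*q+2, 3*q+2), hblkmem q hq _ (by simp), by simp [Prod.ext_iff], Or.inr rfl⟩
    · exact ⟨(3*q+1, 3*q+2), hblkmem q hq _ (by simp), by simp [Prod.ext_iff], Or.inr rfl⟩
  · rcases mem_tailSet h with ⟨h1, h2⟩ | ⟨h1, h2⟩
    · rcases h2 with h2 | h2 <;> subst h2
      · exact ⟨(3*(n/3), 0), htailmem _ (by simp [tailSet, h1]),
          by simp [Prod.ext_iff]; omega, Or.inl rfl⟩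
      · exact ⟨(3*(n/3), 3*(n/3)), htailmem _ (by simp [tailSet, h1]),
          by simp [Prod.ext_iff]; omega, Or.inl rfl⟩
    · rcases h2 with h2 | h2 | h2 <;> subst h2
      · exact ⟨(3*(n/3), 3*(n/3)+1), htailmem _ (by simp [tailSet, h1]),
          by simp [Prod.ext_iff], Or.inl rfl⟩
      · exact ⟨(3*(n/3), 3*(n/3)), htailmem _ (by simp [tailSet, h1]),
          by simp [Prod.ext_iff], Or.inl rfl⟩
      · exact ⟨(3*(n/3), 3*(n/3)+1), htailmem _ (by simp [tailSet, h1]),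
          by simp [Prod.ext_iff], Or.inr rfl⟩



open Fin.NatCast in
lemma upper (n : ℕ) (hn : 3 ≤ n) :
    ∃ S : Finset (Fin n × Fin n), IsWeakResolving 2 S ∧ S.card = (4 * n + 2) / 3 := by
  haveI : NeZero n := ⟨by omega⟩
  set e : ℕ × ℕ → Fin n × Fin n := fun p => ((p.1 : Fin n), (p.2 : Fin n)) with he
  have hval : ∀ p ∈ fullSet n, (e p).1.val = p.1 ∧ (e p).2.val = p.2 := by
    intro p hp
    obtain ⟨h1, h2⟩ := fullSet_bounds hn hp
    exact ⟨Fin.val_cast_of_lt h1, Fin.val_cast_of_lt h2⟩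
  refine ⟨(fullSet n).image e, ?_, ?_⟩
  · apply isWeakResolving_of
    · intro a
      obtain ⟨p, hp, hp1⟩ := rowCover hn a.val a.isLt
      refine ⟨e p, Finset.mem_image_of_mem e hp, ?_⟩
      have := (hval p hp).1
      apply Fin.ext
      rw [this, hp1]
    · intro c
      obtain ⟨p, hp, hp2⟩ := colCover hn c.val c.isLt
      refine ⟨e p, Finset.mem_image_of_mem e hp, ?_⟩
      have := (hval p hp).2
      apply Fin.ext
      rw [this, hp2]
    · intro w hw
      obtain ⟨p, hp, hpe⟩ := Finset.mem_image.mp hw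
      obtain ⟨p', hp', hne, hor⟩ := partner hn hp
      refine ⟨e p', Finset.mem_image_of_mem e hp', ?_, ?_⟩
      · intro hcontra
        apply hne
        have v1 := hval p hp
        have v2 := hval p' hp'
        rw [hpe] at v1
        rw [hcontra] at v2
        exact Prod.ext (by omega) (by omega)
      · subst hpe
        rcases hor with h | h
        · left; apply Fin.ext; rw [(hval p' hp').1, (hval p hp).1, h]
        · right; apply Fin.ext; rw [(hval p' hp').2, (hval p hp).2, h]
  · rw [Finset.card_image_of_injOn, card_fullSet n hn]
    intro p hp p' hp' hpe
    have v1 := hval p hp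
    have v2 := hval p' hp'
    rw [hpe] at v1
    exact Prod.ext (by omega) (by omega)


lemma sum_rr (S : Finset (Fin n × Fin m)) : ∑ a : Fin n, rr S a = S.card :=
  (Finset.card_eq_sum_card_fiberwise (fun w _ => Finset.mem_univ w.1)).symm

lemma sum_ss (S : Finset (Fin n × Fin m)) : ∑ c : Fin m, ss S c = S.card :=
  (Finset.card_eq_sum_card_fiberwise (fun w _ => Finset.mem_univ w.2)).symm

lemma lower (n : ℕ) (hn : 3 ≤ n) (S : Finset (Fin n × Fin n)) (hS : IsWeakResolving 2 S) :
    4 * n ≤ 3 * S.card := by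
  haveI : NeZero n := ⟨by omega⟩
  set r : Fin n → ℕ := rr S with hrdef
  set s : Fin n → ℕ := ss S with hsdef
  have hsum_r : ∑ a : Fin n, r a = S.card := sum_rr S
  have hsum_s : ∑ c : Fin n, s c = S.card := sum_ss S
  -- pair conditions
  have hcolpair : ∀ a a' : Fin n, a ≠ a' → 2 ≤ r a + r a' := by
    intro a a' hne
    have h := hS (a, (0 : Fin n)) (a', (0 : Fin n)) (by simp [Prod.ext_iff, hne])
    rwa [delta_col S (a, (0:Fin n)) (a', (0:Fin n)) hne rfl] at h
  have hrowpair : ∀ c c' : Fin n, c ≠ c' → 2 ≤ s c + s c' := by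
    intro c c' hne
    have h := hS ((0 : Fin n), c) ((0 : Fin n), c') (by simp [Prod.ext_iff, hne])
    rwa [delta_row S ((0:Fin n), c) ((0:Fin n), c') rfl hne] at h
  have hcross : ∀ a a' c c' : Fin n, a ≠ a' → c ≠ c' →
      (2 : ℤ) + 2 * (if (a, c') ∈ S then 1 else 0) + 2 * (if (a', c) ∈ S then 1 else 0)
        ≤ r a + r a' + s c + s c' := by
    intro a a' c c' ha hc
    have h := hS (a, c) (a', c') (by simp [Prod.ext_iff, ha])
    have h2 : (2 : ℤ) ≤ (delta S (a, c) (a', c') : ℤ) := by exact_mod_cast h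
    rw [delta_cross S (a, c) (a', c') ha hc] at h2
    simp only at h2 ⊢
    linarith
  have hL3 : ∀ a a' c c' : Fin n, a ≠ a' → c ≠ c' → (a, c) ∈ S → (a', c') ∈ S →
      6 ≤ r a + r a' + s c + s c' := by
    intro a a' c c' ha hc h1 h2
    have := hcross a a' c' c ha (Ne.symm hc)
    simp only [h1, h2, if_pos] at this
    have : (6 : ℤ) ≤ r a + r a' + s c' + s c := by linarith
    exact_mod_cast (by linarith : (6 : ℤ) ≤ (r a : ℤ) + r a' + s c + s c')
  -- Case 1: empty row
  by_cases hz : ∃ a0, r a0 = 0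
  · obtain ⟨a0, ha0⟩ := hz
    have h2 : ∀ a ∈ Finset.univ.erase a0, 2 ≤ r a := by
      intro a ha
      have hne := Finset.ne_of_mem_erase ha
      have := hcolpair a a0 hne
      omega
    have : 2 * (n - 1) ≤ ∑ a : Fin n, r a := by
      calc 2 * (n - 1) = ∑ _a ∈ Finset.univ.erase a0, 2 := by
              rw [Finset.sum_const, Finset.card_erase_of_mem (Finset.mem_univ a0)]
              simp [Nat.mul_comm]
        _ ≤ ∑ a ∈ Finset.univ.erase a0, r a := Finset.sum_le_sum h2
        _ ≤ ∑ a : Fin n, r a := Finset.sum_le_sum_of_subset (Finset.subset_univ _)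
    omega
  -- Case 2: empty column
  by_cases hz' : ∃ c0, s c0 = 0
  · obtain ⟨c0, hc0⟩ := hz'
    have h2 : ∀ c ∈ Finset.univ.erase c0, 2 ≤ s c := by
      intro c hc
      have hne := Finset.ne_of_mem_erase hc
      have := hrowpair c c0 hne
      omega
    have : 2 * (n - 1) ≤ ∑ c : Fin n, s c := by
      calc 2 * (n - 1) = ∑ _c ∈ Finset.univ.erase c0, 2 := by
              rw [Finset.sum_const, Finset.card_erase_of_mem (Finset.mem_univ c0)]
              simp [Nat.mul_comm]
        _ ≤ ∑ c ∈ Finset.univ.erase c0, s c := Finset.sum_le_sum h2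
        _ ≤ ∑ c : Fin n, s c := Finset.sum_le_sum_of_subset (Finset.subset_univ _)
    omega
  push_neg at hz hz'
  have hr1 : ∀ a, 1 ≤ r a := fun a => Nat.one_le_iff_ne_zero.mpr (hz a)
  have hs1 : ∀ c, 1 ≤ s c := fun c => Nat.one_le_iff_ne_zero.mpr (hz' c)
  set T : Finset (Fin n) := Finset.univ.filter (fun a => r a = 1) with hTdef
  set U : Finset (Fin n) := Finset.univ.filter (fun c => s c = 1) with hUdef
  -- basic counting: 2n ≤ m + t
  have hFt : 2 * n ≤ S.card + T.card := by
    have hpt : ∀ a : Fin n, 2 ≤ r a + (if r a = 1 then 1 else 0) := by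
      intro a
      have := hr1 a
      by_cases h : r a = 1 <;> simp [h] <;> omega
    calc 2 * n = ∑ _a : Fin n, 2 := by simp [Nat.mul_comm]
      _ ≤ ∑ a : Fin n, (r a + if r a = 1 then 1 else 0) := Finset.sum_le_sum fun a _ => hpt a
      _ = S.card + T.card := by
          rw [Finset.sum_add_distrib, hsum_r, Finset.sum_boole]
          simp [hTdef]
  have hFu : 2 * n ≤ S.card + U.card := by
    have hpt : ∀ c : Fin n, 2 ≤ s c + (if s c = 1 then 1 else 0) := by
      intro c
      have := hs1 c
      by_cases h : s c = 1 <;> simp [h] <;> omega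
    calc 2 * n = ∑ _c : Fin n, 2 := by simp [Nat.mul_comm]
      _ ≤ ∑ c : Fin n, (s c + if s c = 1 then 1 else 0) := Finset.sum_le_sum fun c _ => hpt c
      _ = S.card + U.card := by
          rw [Finset.sum_add_distrib, hsum_s, Finset.sum_boole]
          simp [hUdef]
  -- Case 3 / 4: few lonely rows/columns
  by_cases ht1 : T.card ≤ 1
  · omega
  by_cases hu1 : U.card ≤ 1
  · omega
  push_neg at ht1 hu1
  set A : Finset (Fin n × Fin n) := S.filter (fun w => r w.1 = 1) with hAdef
  set B : Finset (Fin n × Fin n) := S.filter (fun w => s w.2 = 1) with hBdef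
  have hTA : T.card ≤ A.card := by
    apply Finset.card_le_card_of_surjOn (fun w => w.1)
    intro a ha
    simp only [hTdef, Finset.coe_filter, Set.mem_setOf_eq, Finset.mem_univ, true_and] at ha
    have hpos : 0 < r a := by omega
    obtain ⟨w, hw⟩ := Finset.card_pos.mp hpos
    have hw' := Finset.mem_filter.mp hw
    exact ⟨w, Finset.mem_coe.mpr (Finset.mem_filter.mpr ⟨hw'.1, by rw [hw'.2]; exact ha⟩), hw'.2⟩
  have hUB : U.card ≤ B.card := by
    apply Finset.card_le_card_of_surjOn (fun w => w.2)
    intro c hc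
    simp only [hUdef, Finset.coe_filter, Set.mem_setOf_eq, Finset.mem_univ, true_and] at hc
    have hpos : 0 < s c := by omega
    obtain ⟨w, hw⟩ := Finset.card_pos.mp hpos
    have hw' := Finset.mem_filter.mp hw
    exact ⟨w, Finset.mem_coe.mpr (Finset.mem_filter.mpr ⟨hw'.1, by rw [hw'.2]; exact hc⟩), hw'.2⟩
  have hAS : A ⊆ S := Finset.filter_subset _ _
  have hBS : B ⊆ S := Finset.filter_subset _ _
  by_cases hov : ∃ w ∈ S, r w.1 = 1 ∧ s w.2 = 1
  · -- Case 6: overlap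
    obtain ⟨w0, hw0S, hr0, hs0⟩ := hov
    -- find a second lonely row
    have ha0T : w0.1 ∈ T := by simp [hTdef, hr0]
    obtain ⟨a1, ha1T, ha1ne⟩ := Finset.exists_mem_ne ht1 w0.1
    have hra1 : r a1 = 1 := (Finset.mem_filter.mp ha1T).2
    obtain ⟨w1, hw1⟩ := Finset.card_pos.mp (by omega : 0 < r a1)
    have hw1' := Finset.mem_filter.mp hw1
    have hw1S : w1 ∈ S := hw1'.1
    have hw11 : w1.1 = a1 := hw1'.2
    -- w1.2 ≠ w0.2
    have hc1ne : w1.2 ≠ w0.2 := by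
      intro hcontra
      have h2 : 2 ≤ s w0.2 := by
        apply Finset.one_lt_card_iff.mpr
        refine ⟨w0, w1, Finset.mem_filter.mpr ⟨hw0S, rfl⟩,
          Finset.mem_filter.mpr ⟨hw1S, hcontra⟩, ?_⟩
        intro he
        exact ha1ne (by rw [he, hw11] : w0.1 = a1).symm
      omega
    have hane : w1.1 ≠ w0.1 := by rw [hw11]; exact ha1ne
    -- s (w1.2) ≥ 3
    have hs3 : 3 ≤ s w1.2 := by
      have := hL3 w1.1 w0.1 w1.2 w0.2 hane hc1ne (by rw [← Prod.mk.eta (p := w1)] at hw1S; exact hw1S)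
        (by rw [← Prod.mk.eta (p := w0)] at hw0S; exact hw0S)
      rw [hw11] at this
      omega
    -- refined column count
    have hFu' : 2 * n + 1 ≤ S.card + U.card := by
      have hpt : ∀ c : Fin n, 2 + (if c = w1.2 then 1 else 0)
          ≤ s c + (if s c = 1 then 1 else 0) := by
        intro c
        have := hs1 c
        by_cases h : c = w1.2
        · have h2 : ¬ (s c = 1) := by rw [h]; omega
          rw [if_pos h, if_neg h2, h]
          omega
        · by_cases h2 : s c = 1 <;> simp [h, h2] <;> omega
      calc 2 * n + 1 = ∑ c : Fin n, (2 + if c = w1.2 then 1 else 0) := by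
            rw [Finset.sum_add_distrib, Finset.sum_const, Finset.sum_ite_eq' Finset.univ w1.2 (fun _ => 1)]
            simp [Nat.mul_comm]
        _ ≤ ∑ c : Fin n, (s c + if s c = 1 then 1 else 0) := Finset.sum_le_sum fun c _ => hpt c
        _ = S.card + U.card := by
            rw [Finset.sum_add_distrib, hsum_s, Finset.sum_boole]
            simp [hUdef]
    -- symmetric: second lonely column
    have hc0U : w0.2 ∈ U := by simp [hUdef, hs0]
    obtain ⟨c2, hc2U, hc2ne⟩ := Finset.exists_mem_ne hu1 w0.2
    have hsc2 : s c2 = 1 := (Finset.mem_filter.mp hc2U).2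
    obtain ⟨w2, hw2⟩ := Finset.card_pos.mp (by omega : 0 < s c2)
    have hw2' := Finset.mem_filter.mp hw2
    have hw2S : w2 ∈ S := hw2'.1
    have hw22 : w2.2 = c2 := hw2'.2
    have hc2ne' : w2.2 ≠ w0.2 := by rw [hw22]; exact hc2ne
    have hane2 : w2.1 ≠ w0.1 := by
      intro hcontra
      have h2 : 2 ≤ r w0.1 := by
        apply Finset.one_lt_card_iff.mpr
        refine ⟨w0, w2, Finset.mem_filter.mpr ⟨hw0S, rfl⟩,
          Finset.mem_filter.mpr ⟨hw2S, hcontra⟩, ?_⟩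
        intro he
        exact hc2ne' (by rw [he] : w2.2 = w0.2)
      omega
    have hsw22 : s w2.2 = 1 := by rw [hw22]; exact hsc2
    have hr3 : 3 ≤ r w2.1 := by
      have := hL3 w2.1 w0.1 w2.2 w0.2 hane2 hc2ne' (by rw [← Prod.mk.eta (p := w2)] at hw2S; exact hw2S)
        (by rw [← Prod.mk.eta (p := w0)] at hw0S; exact hw0S)
      omega
    have hFt' : 2 * n + 1 ≤ S.card + T.card := by
      have hpt : ∀ a : Fin n, 2 + (if a = w2.1 then 1 else 0)
          ≤ r a + (if r a = 1 then 1 else 0) := by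
        intro a
        have := hr1 a
        by_cases h : a = w2.1
        · have h2 : ¬ (r a = 1) := by rw [h]; omega
          rw [if_pos h, if_neg h2, h]
          omega
        · by_cases h2 : r a = 1 <;> simp [h, h2] <;> omega
      calc 2 * n + 1 = ∑ a : Fin n, (2 + if a = w2.1 then 1 else 0) := by
            rw [Finset.sum_add_distrib, Finset.sum_const, Finset.sum_ite_eq' Finset.univ w2.1 (fun _ => 1)]
            simp [Nat.mul_comm]
        _ ≤ ∑ a : Fin n, (r a + if r a = 1 then 1 else 0) := Finset.sum_le_sum fun a _ => hpt a
        _ = S.card + T.card := by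
            rw [Finset.sum_add_distrib, hsum_r, Finset.sum_boole]
            simp [hTdef]
    -- A ∩ B ⊆ {w0}
    have hABsub : A ∩ B ⊆ {w0} := by
      intro w hw
      rw [Finset.mem_inter] at hw
      obtain ⟨hwA, hwB⟩ := hw
      have hwS : w ∈ S := hAS hwA
      have hwr : r w.1 = 1 := (Finset.mem_filter.mp hwA).2
      have hws : s w.2 = 1 := (Finset.mem_filter.mp hwB).2
      rw [Finset.mem_singleton]
      by_contra hne
      have h1 : w.1 ≠ w0.1 := by
        intro hcontra
        have h2 : 2 ≤ r w0.1 := by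
          apply Finset.one_lt_card_iff.mpr
          exact ⟨w, w0, Finset.mem_filter.mpr ⟨hwS, hcontra⟩,
            Finset.mem_filter.mpr ⟨hw0S, rfl⟩, hne⟩
        omega
      have h2 : w.2 ≠ w0.2 := by
        intro hcontra
        have h2 : 2 ≤ s w0.2 := by
          apply Finset.one_lt_card_iff.mpr
          exact ⟨w, w0, Finset.mem_filter.mpr ⟨hwS, hcontra⟩,
            Finset.mem_filter.mpr ⟨hw0S, rfl⟩, hne⟩
        omega
      have := hL3 w.1 w0.1 w.2 w0.2 h1 h2 (by rw [← Prod.mk.eta (p := w)] at hwS; exact hwS)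
        (by rw [← Prod.mk.eta (p := w0)] at hw0S; exact hw0S)
      omega
    have hABcard : (A ∩ B).card ≤ 1 := by
      calc (A ∩ B).card ≤ ({w0} : Finset _).card := Finset.card_le_card hABsub
        _ = 1 := Finset.card_singleton w0
    have hunion : (A ∪ B).card ≤ S.card := Finset.card_le_card (Finset.union_subset hAS hBS)
    have := Finset.card_union_add_card_inter A B
    omega
  · -- Case 5: no overlap
    push_neg at hov
    have hdisj : Disjoint A B := by
      rw [Finset.disjoint_left]
      intro w hwA hwB
      exact hov w (hAS hwA) (Finset.mem_filter.mp hwA).2 (Finset.mem_filter.mp hwB).2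
    have hunion : A.card + B.card ≤ S.card := by
      rw [← Finset.card_union_of_disjoint hdisj]
      exact Finset.card_le_card (Finset.union_subset hAS hBS)
    omega


end W14

/-- If `n ≥ 3`, then `wdim_2(K_n □ K_n) = ⌈4n/3⌉`. -/
theorem stmt14 (n : ℕ) (hn : 3 ≤ n) : wdim n n 2 = (4 * n + 2) / 3 := by
  obtain ⟨S₀, hS₀, hcard⟩ := W14.upper n hn
  have hmem : (4 * n + 2) / 3 ∈
      {c | ∃ S : Finset (Fin n × Fin n), IsWeakResolving 2 S ∧ S.card = c} := ⟨S₀, hS₀, hcard⟩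
  unfold wdim
  apply le_antisymm
  · exact Nat.sInf_le hmem
  · apply le_csInf ⟨_, hmem⟩
    rintro c ⟨S, hS, rfl⟩
    have := W14.lower n hn S hS
    omega
end

section
/- Let Y be a weak 2-resolving set of K_n □ K_n (n ≥ 6) and let G_Y be the bipartite graph on parts V_1 = Z_n, V_2 = Z_n' with i adjacent to j' iff (i,j) ∈ Y. Then G_Y has no isolated vertices. -/
/-- For `n ≥ 6`, if `Y` is a weak `2`-resolving set of `K_n □ K_n` of size at most
`⌈4n/3⌉`, then the associated bipartite graph `G_Y` (with `i` adjacent to `j'` iff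
`(i,j) ∈ Y`) has no isolated vertices, i.e. every row index and every column index
occurs in `Y`. -/
theorem stmt16 (n : ℕ) (hn : 6 ≤ n) (Y : Finset (Fin n × Fin n))
    (hY : IsWeakResolving 2 Y) (hcard : Y.card ≤ (4 * n + 2) / 3) :
    (∀ i : Fin n, ∃ j : Fin n, (i, j) ∈ Y) ∧
    (∀ j : Fin n, ∃ i : Fin n, (i, j) ∈ Y) := by
  have hnpos : 0 < n := by omega
  constructor
  · intro i
    by_contra h
    push_neg at h
    have hrow : ∀ w ∈ Y, w.1 ≠ i := by
      intro w hw hwi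
      exact h w.2 (by rw [← hwi]; exact hw)
    have key : ∀ j : Fin n, j ≠ i → 2 ≤ (Y.filter (fun w => w.1 = j)).card := by
      intro j hj
      have hne : ((i, (⟨0, hnpos⟩ : Fin n)) : Fin n × Fin n) ≠ (j, ⟨0, hnpos⟩) := by
        simp [Prod.ext_iff, hj.symm]
      have h2 := hY _ _ hne
      have hdel : delta Y (i, ⟨0, hnpos⟩) (j, ⟨0, hnpos⟩)
          = (Y.filter (fun w => w.1 = j)).card := by
        unfold delta
        rw [Finset.card_filter]
        apply Finset.sum_congr rfl
        intro w hw
        have h1 : i ≠ w.1 := fun e => hrow w hw e.symm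
        simp only [hd, if_neg h1]
        by_cases h2 : j = w.1 <;>
          by_cases h3 : (⟨0, hnpos⟩ : Fin n) = w.2 <;>
            simp [eq_comm, h2, h3]
      rw [hdel] at h2
      exact h2
    have hsum : Y.card = ∑ j : Fin n, (Y.filter (fun w => w.1 = j)).card :=
      Finset.card_eq_sum_card_fiberwise (fun w _ => Finset.mem_univ w.1)
    have hlow : 2 * (n - 1) ≤ Y.card := by
      calc 2 * (n - 1) = ∑ _j ∈ Finset.univ.erase i, 2 := by
            rw [Finset.sum_const, Finset.card_erase_of_mem (Finset.mem_univ i),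
              Finset.card_univ, Fintype.card_fin, smul_eq_mul, mul_comm]
        _ ≤ ∑ j ∈ Finset.univ.erase i, (Y.filter (fun w => w.1 = j)).card :=
            Finset.sum_le_sum (fun j hj => key j (Finset.ne_of_mem_erase hj))
        _ ≤ ∑ j : Fin n, (Y.filter (fun w => w.1 = j)).card :=
            Finset.sum_le_sum_of_subset (Finset.erase_subset _ _)
        _ = Y.card := hsum.symm
    omega
  · intro j
    by_contra h
    push_neg at h
    have hcol : ∀ w ∈ Y, w.2 ≠ j := by
      intro w hw hwj
      exact h w.1 (by rw [← hwj]; exact hw)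
    have key : ∀ k : Fin n, k ≠ j → 2 ≤ (Y.filter (fun w => w.2 = k)).card := by
      intro k hk
      have hne : (((⟨0, hnpos⟩ : Fin n), j) : Fin n × Fin n) ≠ (⟨0, hnpos⟩, k) := by
        simp [Prod.ext_iff, hk.symm]
      have h2 := hY _ _ hne
      have hdel : delta Y (⟨0, hnpos⟩, j) (⟨0, hnpos⟩, k)
          = (Y.filter (fun w => w.2 = k)).card := by
        unfold delta
        rw [Finset.card_filter]
        apply Finset.sum_congr rfl
        intro w hw
        have h1 : j ≠ w.2 := fun e => hcol w hw e.symm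
        simp only [hd, if_neg h1]
        by_cases h2 : k = w.2 <;>
          by_cases h3 : (⟨0, hnpos⟩ : Fin n) = w.1 <;>
            simp [eq_comm, h2, h3]
      rw [hdel] at h2
      exact h2
    have hsum : Y.card = ∑ k : Fin n, (Y.filter (fun w => w.2 = k)).card :=
      Finset.card_eq_sum_card_fiberwise (fun w _ => Finset.mem_univ w.2)
    have hlow : 2 * (n - 1) ≤ Y.card := by
      calc 2 * (n - 1) = ∑ _k ∈ Finset.univ.erase j, 2 := by
            rw [Finset.sum_const, Finset.card_erase_of_mem (Finset.mem_univ j),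
              Finset.card_univ, Fintype.card_fin, smul_eq_mul, mul_comm]
        _ ≤ ∑ k ∈ Finset.univ.erase j, (Y.filter (fun w => w.2 = k)).card :=
            Finset.sum_le_sum (fun k hk => key k (Finset.ne_of_mem_erase hk))
        _ ≤ ∑ k : Fin n, (Y.filter (fun w => w.2 = k)).card :=
            Finset.sum_le_sum_of_subset (Finset.erase_subset _ _)
        _ = Y.card := hsum.symm
    omega
end

section
/- In G = K_n □ K_m, for two non-aligned vertices u = (i_u,j_u) and v = (i_v,j_v) (i_u ≠ i_v and j_u ≠ j_v) and any set S ⊆ V(G) with indicator s, one has Σ_{w∈V(G)} |d(u,w) − d(v,w)|·s_w = h_{j_u} + h_{j_v} + g_{i_u} + g_{i_v} − 2 s_{(i_u,j_v)} − 2 s_{(i_v,j_u)}, where h_j = |S ∩ (Z_n × {j})| and g_i = |S ∩ ({i} × Z_m)|. -/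
/-- In `K_n □ K_m`, for non-aligned vertices `u = (i_u,j_u)`, `v = (i_v,j_v)` and a
set `S` with indicator `s`, one has
`Σ_w |d(u,w) − d(v,w)|·s_w = h_{j_u} + h_{j_v} + g_{i_u} + g_{i_v} − 2s_{(i_u,j_v)} − 2s_{(i_v,j_u)}`. -/
theorem stmt18 (n m : ℕ) (u v : Fin n × Fin m) (hne1 : u.1 ≠ v.1) (hne2 : u.2 ≠ v.2)
    (S : Finset (Fin n × Fin m)) :
    (∑ w ∈ S, (((hd u w : ℤ) - (hd v w : ℤ)).natAbs : ℤ))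
      = ((S.filter (fun p => p.2 = u.2)).card : ℤ)
        + ((S.filter (fun p => p.2 = v.2)).card : ℤ)
        + ((S.filter (fun p => p.1 = u.1)).card : ℤ)
        + ((S.filter (fun p => p.1 = v.1)).card : ℤ)
        - 2 * (if (u.1, v.2) ∈ S then 1 else 0)
        - 2 * (if (v.1, u.2) ∈ S then 1 else 0) := by
  have key : ∀ w : Fin n × Fin m,
      (((hd u w : ℤ) - (hd v w : ℤ)).natAbs : ℤ)
        = (if w.2 = u.2 then (1:ℤ) else 0) + (if w.2 = v.2 then 1 else 0)
          + (if w.1 = u.1 then 1 else 0) + (if w.1 = v.1 then 1 else 0)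
          - 2 * (if w = (u.1, v.2) then 1 else 0)
          - 2 * (if w = (v.1, u.2) then 1 else 0) := by
    intro w
    simp only [hd, Prod.ext_iff]
    rcases eq_or_ne w.1 u.1 with h1 | h1 <;> rcases eq_or_ne w.2 u.2 with h2 | h2 <;>
      rcases eq_or_ne w.1 v.1 with h3 | h3 <;> rcases eq_or_ne w.2 v.2 with h4 | h4 <;>
      simp_all [eq_comm]
  rw [Finset.sum_congr rfl (fun w _ => key w)]
  have hmem : ∀ p : Fin n × Fin m,
      (if p ∈ S then (1:ℤ) else 0) = ∑ w ∈ S, if w = p then (1:ℤ) else 0 := by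
    intro p; rw [Finset.sum_ite_eq' S p (fun _ => (1:ℤ))]
  simp only [Finset.card_filter, hmem, Finset.sum_sub_distrib, Finset.sum_add_distrib,
    Finset.mul_sum, Nat.cast_sum]
  push_cast
  ring
end
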